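/- arXiv:2504.05861 — 3 statements merged into one kernel-verified Lean document; each statement's English description precedes it below -/
import Mathlib

section
/- There exists a constant c > 0 such that for every positive integer n there exist a set P of n distinct points in ℝ² and a set L of n distinct lines in ℝ² (a line being a one-dimensional affine subspace of ℝ²) such that the number of incident pairs (p, ℓ) ∈ P × L with p ∈ ℓ is at least c·n^{4/3}; moreover, the incidence graph contains no K_{2,2}, i.e., no two distinct points of P lie on two distinct common lines of L. -/
/-- A line in `ℝ²`: a one-dimensional affine subspace, i.e. `{p + t • v | t : ℝ}`
for some point `p` and nonzero direction `v`. -/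
def IsLine (s : Set (EuclideanSpace ℝ (Fin 2))) : Prop :=
  ∃ (p v : EuclideanSpace ℝ (Fin 2)), v ≠ 0 ∧ s = {x | ∃ t : ℝ, x = p + t • v}

/-- The point `(x, y)` in `ℝ²`. -/
def pt (x y : ℝ) : EuclideanSpace ℝ (Fin 2) := WithLp.toLp 2 (fun i : Fin 2 => if i = 0 then x else y)

@[simp] lemma pt_zero (x y : ℝ) : pt x y 0 = x := rfl
@[simp] lemma pt_one (x y : ℝ) : pt x y 1 = y := rfl

/-- The line `y = a x + b`. -/
def lineS (a b : ℝ) : Set (EuclideanSpace ℝ (Fin 2)) := {x | x 1 = a * x 0 + b}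
/-- The vertical line `x = c`. -/
def vlineS (c : ℝ) : Set (EuclideanSpace ℝ (Fin 2)) := {x | x 0 = c}

@[simp] lemma mem_lineS {a b : ℝ} {x : EuclideanSpace ℝ (Fin 2)} :
    x ∈ lineS a b ↔ x 1 = a * x 0 + b := Iff.rfl
@[simp] lemma mem_vlineS {c : ℝ} {x : EuclideanSpace ℝ (Fin 2)} :
    x ∈ vlineS c ↔ x 0 = c := Iff.rfl

lemma pt_inj {x y x' y' : ℝ} (h : pt x y = pt x' y') : x = x' ∧ y = y' := by
  constructor
  · have := congrArg (fun v : EuclideanSpace ℝ (Fin 2) => v 0) h; simpa using this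
  · have := congrArg (fun v : EuclideanSpace ℝ (Fin 2) => v 1) h; simpa using this

lemma isLine_lineS (a b : ℝ) : IsLine (lineS a b) := by
  refine ⟨pt 0 b, pt 1 a, ?_, ?_⟩
  · intro h
    have : (pt 1 a) 0 = (0 : EuclideanSpace ℝ (Fin 2)) 0 := by rw [h]
    simp at this
  · ext x
    simp only [mem_lineS, Set.mem_setOf_eq]
    constructor
    · intro h
      refine ⟨x 0, ?_⟩
      ext i
      fin_cases i <;> simp [PiLp.add_apply, PiLp.smul_apply, h] <;> ring
    · rintro ⟨t, rfl⟩
      simp [PiLp.add_apply, PiLp.smul_apply]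
      ring

lemma isLine_vlineS (c : ℝ) : IsLine (vlineS c) := by
  refine ⟨pt c 0, pt 0 1, ?_, ?_⟩
  · intro h
    have : (pt 0 1) 1 = (0 : EuclideanSpace ℝ (Fin 2)) 1 := by rw [h]
    simp at this
  · ext x
    simp only [mem_vlineS, Set.mem_setOf_eq]
    constructor
    · intro h
      refine ⟨x 1, ?_⟩
      ext i
      fin_cases i <;> simp [PiLp.add_apply, PiLp.smul_apply, h]
    · rintro ⟨t, rfl⟩
      simp [PiLp.add_apply, PiLp.smul_apply]

lemma lineS_inj {a b a' b' : ℝ} (h : lineS a b = lineS a' b') : a = a' ∧ b = b' := by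
  have h1 : pt 0 b ∈ lineS a b := by simp
  have h2 : pt 1 (a + b) ∈ lineS a b := by simp
  rw [h] at h1 h2
  simp at h1 h2
  constructor <;> linarith

lemma vlineS_inj {c c' : ℝ} (h : vlineS c = vlineS c') : c = c' := by
  have h1 : pt c 0 ∈ vlineS c := by simp
  rw [h] at h1
  simpa using h1

lemma lineS_ne_vlineS (a b c : ℝ) : lineS a b ≠ vlineS c := by
  intro h
  have h1 : pt 0 b ∈ lineS a b := by simp
  have h2 : pt 1 (a + b) ∈ lineS a b := by simp
  rw [h] at h1 h2
  simp at h1 h2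
  linarith [h1, h2]

lemma line_eq_canonical {ℓ : Set (EuclideanSpace ℝ (Fin 2))} (h : IsLine ℓ)
    {p p' : EuclideanSpace ℝ (Fin 2)} (hpp : p ≠ p') (hp : p ∈ ℓ) (hp' : p' ∈ ℓ) :
    ℓ = {x | ∃ s : ℝ, x = p + s • (p' - p)} := by
  obtain ⟨q, v, hv, rfl⟩ := h
  obtain ⟨t₁, rfl⟩ := hp
  obtain ⟨t₂, rfl⟩ := hp'
  have ht : t₁ ≠ t₂ := by rintro rfl; exact hpp rfl
  have hd : (q + t₂ • v) - (q + t₁ • v) = (t₂ - t₁) • v := by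
    rw [sub_smul]; abel
  ext x
  simp only [Set.mem_setOf_eq, hd]
  constructor
  · rintro ⟨t, rfl⟩
    refine ⟨(t - t₁) / (t₂ - t₁), ?_⟩
    rw [smul_smul, div_mul_cancel₀ _ (sub_ne_zero_of_ne (Ne.symm ht))]
    rw [add_assoc, ← add_smul]
    ring_nf
  · rintro ⟨s, rfl⟩
    refine ⟨t₁ + s * (t₂ - t₁), ?_⟩
    rw [smul_smul, add_assoc, ← add_smul]

/-- Two distinct points determine at most one line. -/
lemma line_unique {ℓ ℓ' : Set (EuclideanSpace ℝ (Fin 2))} (h : IsLine ℓ) (h' : IsLine ℓ')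
    {p p' : EuclideanSpace ℝ (Fin 2)} (hpp : p ≠ p')
    (h1 : p ∈ ℓ) (h2 : p' ∈ ℓ) (h3 : p ∈ ℓ') (h4 : p' ∈ ℓ') : ℓ = ℓ' := by
  rw [line_eq_canonical h hpp h1 h2, line_eq_canonical h' hpp h3 h4]

lemma kexists {n : ℕ} (hn : 2 ≤ n) :
    ∃ k : ℕ, 1 ≤ k ∧ 2 * k ^ 3 ≤ n ∧ n < 16 * k ^ 3 := by
  classical
  set P : ℕ → Prop := fun m => 2 * m ^ 3 ≤ n with hP
  have hP1 : P 1 := by simp [hP]; omega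
  set k := Nat.findGreatest P n with hk
  have h1 : 1 ≤ k := Nat.le_findGreatest (by omega) hP1
  have h2 : P k := Nat.findGreatest_spec (m := 1) (by omega) hP1
  have h2' : 2 * k ^ 3 ≤ n := h2
  have hself : k ≤ k ^ 3 := Nat.le_self_pow (by norm_num) k
  have hkn : k < n := by omega
  have h3 : ¬ P (k + 1) :=
    Nat.findGreatest_is_greatest (P := P) (n := n) (k := k + 1) (by omega) (by omega)
  have h3' : n < 2 * (k + 1) ^ 3 := by simpa [hP] using Nat.lt_of_not_le h3
  have hk2 : k ≤ k ^ 2 := Nat.le_self_pow (by norm_num) k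
  have hk23 : k ^ 2 ≤ k ^ 3 := Nat.pow_le_pow_right (by omega) (by norm_num)
  have hcube : (k + 1) ^ 3 ≤ 8 * k ^ 3 := by ring_nf; nlinarith
  exact ⟨k, h1, h2', by omega⟩

lemma rarith {n k : ℕ} (h1 : 1 ≤ k) (h3 : n < 16 * k ^ 3) :
    (1 / 64 : ℝ) * (n : ℝ) ^ ((4 : ℝ) / 3) ≤ ((k : ℝ)) ^ (4 : ℕ) := by
  have hk0 : (0 : ℝ) ≤ k := Nat.cast_nonneg k
  have hn : (n : ℝ) ≤ 16 * (k : ℝ) ^ 3 := by exact_mod_cast h3.le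
  have step1 : (n : ℝ) ^ ((4 : ℝ) / 3) ≤ (16 * (k : ℝ) ^ 3) ^ ((4 : ℝ) / 3) :=
    Real.rpow_le_rpow (Nat.cast_nonneg n) hn (by norm_num)
  have step2 : (16 * (k : ℝ) ^ 3) ^ ((4 : ℝ) / 3)
      = 16 ^ ((4:ℝ)/3) * ((k:ℝ) ^ 3) ^ ((4:ℝ)/3) :=
    Real.mul_rpow (by norm_num) (by positivity)
  have step3 : ((k:ℝ) ^ 3) ^ ((4:ℝ)/3) = (k:ℝ) ^ (4 : ℕ) := by
    rw [← Real.rpow_natCast (k:ℝ) 3, ← Real.rpow_mul hk0]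
    rw [show (3:ℕ) * ((4:ℝ)/3) = ((4:ℕ):ℝ) by push_cast; ring, Real.rpow_natCast]
  have step4 : (16 : ℝ) ^ ((4:ℝ)/3) ≤ 64 := by
    have h : (16:ℝ) ^ ((4:ℝ)/3) ≤ (16:ℝ) ^ ((3:ℝ)/2) :=
      Real.rpow_le_rpow_of_exponent_le (by norm_num) (by norm_num)
    refine h.trans ?_
    have h16 : (16:ℝ) = (4:ℝ) ^ ((2:ℕ):ℝ) := by rw [Real.rpow_natCast]; norm_num
    rw [h16, ← Real.rpow_mul (by norm_num)]
    rw [show ((2:ℕ):ℝ) * ((3:ℝ)/2) = ((3:ℕ):ℝ) by push_cast; ring, Real.rpow_natCast]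
    norm_num
  nlinarith [Real.rpow_nonneg (Nat.cast_nonneg n) ((4:ℝ)/3), pow_nonneg hk0 4]

theorem stmt_13 :
    ∃ c : ℝ, 0 < c ∧ ∀ n : ℕ, 0 < n →
      ∃ (P : Finset (EuclideanSpace ℝ (Fin 2)))
        (L : Finset (Set (EuclideanSpace ℝ (Fin 2)))),
        P.card = n ∧ L.card = n ∧ (∀ ℓ ∈ L, IsLine ℓ) ∧
        (¬ ∃ p ∈ P, ∃ p' ∈ P, ∃ ℓ ∈ L, ∃ ℓ' ∈ L, p ≠ p' ∧ ℓ ≠ ℓ' ∧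
          p ∈ ℓ ∧ p ∈ ℓ' ∧ p' ∈ ℓ ∧ p' ∈ ℓ') ∧
        c * (n : ℝ) ^ ((4 : ℝ) / 3) ≤
          ({q : EuclideanSpace ℝ (Fin 2) × Set (EuclideanSpace ℝ (Fin 2)) |
            q.1 ∈ P ∧ q.2 ∈ L ∧ q.1 ∈ q.2}.ncard : ℝ) := by
  classical
  refine ⟨1 / 64, by norm_num, ?_⟩
  intro n hn
  rcases eq_or_lt_of_le (Nat.succ_le_of_lt hn) with h1 | h2
  · -- n = 1
    have hn1 : n = 1 := h1.symm
    subst hn1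
    refine ⟨{pt 0 0}, {lineS 0 0}, by simp, by simp, ?_, ?_, ?_⟩
    · intro ℓ hℓ
      simp at hℓ
      subst hℓ
      exact isLine_lineS 0 0
    · rintro ⟨p, hp, p', hp', ℓ, hℓ, ℓ', hℓ', hne, -⟩
      simp at hp hp'
      exact hne (hp.trans hp'.symm)
    · set S : Set (EuclideanSpace ℝ (Fin 2) × Set (EuclideanSpace ℝ (Fin 2))) :=
        {q | q.1 ∈ ({pt 0 0} : Finset _) ∧ q.2 ∈ ({lineS 0 0} : Finset _) ∧ q.1 ∈ q.2}
      have hmem : (pt 0 0, lineS 0 0) ∈ S := by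
        refine ⟨by simp, by simp, by simp⟩
      have hfin : S.Finite := by
        apply Set.Finite.subset (Set.finite_singleton (pt 0 0, lineS 0 0))
        rintro ⟨p, ℓ⟩ ⟨hp, hℓ, -⟩
        simp at hp hℓ
        simp [hp, hℓ]
      have h1le : 1 ≤ S.ncard := by
        have := (Set.ncard_pos hfin).mpr ⟨_, hmem⟩
        omega
      have : (1 : ℝ) ≤ (S.ncard : ℝ) := by exact_mod_cast h1le
      calc (1/64 : ℝ) * ((1:ℕ) : ℝ) ^ ((4:ℝ)/3) = 1/64 := by
            simp
        _ ≤ 1 := by norm_num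
        _ ≤ (S.ncard : ℝ) := this
  · -- n ≥ 2
    obtain ⟨k, hk1, hk2, hk3⟩ := kexists h2
    have hk3le : k ^ 3 ≤ n := by omega
    -- points
    set gridF : Finset (EuclideanSpace ℝ (Fin 2)) :=
      (Finset.range k ×ˢ Finset.range (2 * k ^ 2)).image
        (fun p : ℕ × ℕ => pt p.1 p.2) with hgridF
    set padPF : Finset (EuclideanSpace ℝ (Fin 2)) :=
      (Finset.range (n - 2 * k ^ 3)).image (fun j : ℕ => pt (-(1 + j)) 0) with hpadPF
    set P := gridF ∪ padPF with hP
    -- lines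
    set lcoreF : Finset (Set (EuclideanSpace ℝ (Fin 2))) :=
      (Finset.range k ×ˢ Finset.range (k ^ 2)).image
        (fun p : ℕ × ℕ => lineS p.1 p.2) with hlcoreF
    set padLF : Finset (Set (EuclideanSpace ℝ (Fin 2))) :=
      (Finset.range (n - k ^ 3)).image (fun j : ℕ => vlineS j) with hpadLF
    set L := lcoreF ∪ padLF with hL
    have hginj : Function.Injective (fun p : ℕ × ℕ => pt (p.1 : ℝ) (p.2 : ℝ)) := by
      rintro ⟨a, b⟩ ⟨c, d⟩ h
      obtain ⟨h1, h2⟩ := pt_inj h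
      have : a = c := by exact_mod_cast h1
      have : b = d := by exact_mod_cast h2
      simp_all
    have hpinj : Function.Injective (fun j : ℕ => pt (-(1 + (j:ℝ))) 0) := by
      intro a b h
      obtain ⟨h1, -⟩ := pt_inj h
      have : (a : ℝ) = b := by linarith
      exact_mod_cast this
    have hPdisj : Disjoint gridF padPF := by
      rw [Finset.disjoint_left]
      intro x hx hx'
      simp only [hgridF, hpadPF, Finset.mem_image, Finset.mem_product,
        Finset.mem_range] at hx hx'
      obtain ⟨⟨a, b⟩, -, rfl⟩ := hx
      obtain ⟨j, -, hj⟩ := hx'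
      obtain ⟨h1, -⟩ := pt_inj hj
      have ha : (0:ℝ) ≤ (a:ℝ) := by positivity
      have hb : (0:ℝ) < 1 + (j:ℝ) := by positivity
      linarith
    have hPcard : P.card = n := by
      rw [hP, Finset.card_union_of_disjoint hPdisj]
      rw [hgridF, hpadPF, Finset.card_image_of_injective _ hginj,
        Finset.card_image_of_injective _ hpinj, Finset.card_product,
        Finset.card_range, Finset.card_range, Finset.card_range]
      have : k * (2 * k ^ 2) = 2 * k ^ 3 := by ring
      omega
    have hlinj : Function.Injective (fun p : ℕ × ℕ => lineS (p.1 : ℝ) (p.2 : ℝ)) := by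
      rintro ⟨a, b⟩ ⟨c, d⟩ h
      obtain ⟨h1, h2⟩ := lineS_inj h
      have : a = c := by exact_mod_cast h1
      have : b = d := by exact_mod_cast h2
      simp_all
    have hvinj : Function.Injective (fun j : ℕ => vlineS (j:ℝ)) := by
      intro a b h
      have := vlineS_inj h
      exact_mod_cast this
    have hLdisj : Disjoint lcoreF padLF := by
      rw [Finset.disjoint_left]
      intro x hx hx'
      simp only [hlcoreF, hpadLF, Finset.mem_image, Finset.mem_product,
        Finset.mem_range] at hx hx'
      obtain ⟨⟨a, b⟩, -, rfl⟩ := hx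
      obtain ⟨j, -, hj⟩ := hx'
      exact lineS_ne_vlineS _ _ _ hj.symm
    have hLcard : L.card = n := by
      rw [hL, Finset.card_union_of_disjoint hLdisj]
      rw [hlcoreF, hpadLF, Finset.card_image_of_injective _ hlinj,
        Finset.card_image_of_injective _ hvinj, Finset.card_product,
        Finset.card_range, Finset.card_range, Finset.card_range]
      have : k * k ^ 2 = k ^ 3 := by ring
      omega
    have hLines : ∀ ℓ ∈ L, IsLine ℓ := by
      intro ℓ hℓ
      rw [hL, Finset.mem_union] at hℓ
      rcases hℓ with hℓ | hℓ
      · simp only [hlcoreF, Finset.mem_image] at hℓ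
        obtain ⟨⟨a, b⟩, -, rfl⟩ := hℓ
        exact isLine_lineS _ _
      · simp only [hpadLF, Finset.mem_image] at hℓ
        obtain ⟨j, -, rfl⟩ := hℓ
        exact isLine_vlineS _
    refine ⟨P, L, hPcard, hLcard, hLines, ?_, ?_⟩
    · rintro ⟨p, hp, p', hp', ℓ, hℓ, ℓ', hℓ', hne, hlne, hm1, hm2, hm3, hm4⟩
      exact hlne (line_unique (hLines ℓ hℓ) (hLines ℓ' hℓ') hne hm1 hm3 hm2 hm4)
    · set S : Set (EuclideanSpace ℝ (Fin 2) × Set (EuclideanSpace ℝ (Fin 2))) :=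
        {q | q.1 ∈ P ∧ q.2 ∈ L ∧ q.1 ∈ q.2} with hS
      have hSfin : S.Finite := by
        apply Set.Finite.subset (P ×ˢ L).finite_toSet
        rintro ⟨p, ℓ⟩ ⟨h1, h2, -⟩
        simp [Finset.mem_product]
        exact ⟨h1, h2⟩
      set T : Finset (EuclideanSpace ℝ (Fin 2) × Set (EuclideanSpace ℝ (Fin 2))) :=
        ((Finset.range k ×ˢ Finset.range (k ^ 2)) ×ˢ Finset.range k).image
          (fun q : (ℕ × ℕ) × ℕ =>
            (pt (q.2 : ℝ) ((q.1.1 : ℝ) * (q.2 : ℝ) + (q.1.2 : ℝ)),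
             lineS (q.1.1 : ℝ) (q.1.2 : ℝ))) with hT
      have hTinj : Function.Injective (fun q : (ℕ × ℕ) × ℕ =>
          (pt (q.2 : ℝ) ((q.1.1 : ℝ) * (q.2 : ℝ) + (q.1.2 : ℝ)),
           lineS (q.1.1 : ℝ) (q.1.2 : ℝ))) := by
        rintro ⟨⟨a, b⟩, x⟩ ⟨⟨a', b'⟩, x'⟩ h
        rw [Prod.mk.injEq] at h
        obtain ⟨hptq, hlq⟩ := h
        obtain ⟨ha, hb⟩ := lineS_inj hlq
        obtain ⟨hx, -⟩ := pt_inj hptq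
        have ha' : a = a' := by exact_mod_cast ha
        have hb' : b = b' := by exact_mod_cast hb
        have hx' : x = x' := by exact_mod_cast hx
        simp_all
      have hTcard : T.card = k ^ 4 := by
        rw [hT, Finset.card_image_of_injective _ hTinj]
        simp only [Finset.card_product, Finset.card_range]
        ring
      have hTS : (T : Set _) ⊆ S := by
        intro q hq
        simp only [hT, Finset.coe_image, Set.mem_image, Finset.mem_coe,
          Finset.mem_product, Finset.mem_range] at hq
        obtain ⟨⟨⟨a, b⟩, x⟩, ⟨⟨ha, hb⟩, hx⟩, rfl⟩ := hq
        dsimp only at ha hb hx ⊢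
        refine ⟨?_, ?_, ?_⟩
        · -- the point is in P
          rw [hP, Finset.mem_union]
          left
          rw [hgridF, Finset.mem_image]
          refine ⟨(x, a * x + b), ?_, ?_⟩
          · rw [Finset.mem_product, Finset.mem_range, Finset.mem_range]
            have hax : a * x ≤ k * k := Nat.mul_le_mul (le_of_lt ha) (le_of_lt hx)
            have hkk : k * k = k ^ 2 := by ring
            exact ⟨hx, by omega⟩
          · push_cast
            rfl
        · rw [hL, Finset.mem_union]
          left
          rw [hlcoreF, Finset.mem_image]
          exact ⟨(a, b), by
            rw [Finset.mem_product, Finset.mem_range, Finset.mem_range]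
            exact ⟨ha, hb⟩, rfl⟩
        · simp
      have hcount : (k ^ 4 : ℕ) ≤ S.ncard := by
        rw [← hTcard, ← Set.ncard_coe_finset T]
        exact Set.ncard_le_ncard hTS hSfin
      have hcast : ((k:ℝ)) ^ (4:ℕ) ≤ (S.ncard : ℝ) := by
        exact_mod_cast hcount
      exact (rarith hk1 hk3).trans hcast
end

section
/- There exists a constant c > 0 such that for every positive integer n there exist indexed families R and B, each consisting of n closed Euclidean unit balls in ℝ⁵ (balls of radius 1), such that the bipartite intersection graph between R and B (the simple graph on vertex set R ⊔ B in which r ∈ R is adjacent to b ∈ B if and only if r ∩ b ≠ ∅) contains no K_{2,2} (there do not exist distinct r, r' ∈ R and distinct b, b' ∈ B with all four intersections r ∩ b, r ∩ b', r' ∩ b, r' ∩ b' nonempty) and has at least c·n^{4/3} edges. -/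
/-- A closed Euclidean unit ball in `ℝ⁵`. -/
def IsUnitBall (s : Set (EuclideanSpace ℝ (Fin 5))) : Prop :=
  ∃ p : EuclideanSpace ℝ (Fin 5), s = Metric.closedBall p 1

/-- The bipartite intersection graph between two indexed families of sets:
`Sum.inl i` is adjacent to `Sum.inr j` iff `R i ∩ B j ≠ ∅`. -/
def biIntersectionGraph {α : Type*} {n : ℕ} (R B : Fin n → Set α) :
    SimpleGraph (Fin n ⊕ Fin n) :=
  SimpleGraph.fromRel (fun x y =>
    match x, y with
    | Sum.inl i, Sum.inr j => (R i ∩ B j).Nonempty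
    | _, _ => False)

open Real Metric Sum

noncomputable section Aux15

namespace Aux15

abbrev E5 := EuclideanSpace ℝ (Fin 5)

/-- scaled Veronese map -/
def ver (a b c : ℝ) : E5 :=
  WithLp.toLp 2 ![2*Real.sqrt 3*a*b, 2*Real.sqrt 3*a*c, 2*Real.sqrt 3*b*c,
    Real.sqrt 3*(a^2-b^2), a^2+b^2-2*c^2]

lemma ver_normsq (a b c : ℝ) :
    ∑ i, (ver a b c) i ^ 2 = 4 * (a^2+b^2+c^2)^2 := by
  have hs : Real.sqrt 3 ^ 2 = 3 := Real.sq_sqrt (by norm_num)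
  simp only [Fin.sum_univ_five, ver, PiLp.toLp_apply]
  norm_num [Matrix.cons_val_zero, Matrix.cons_val_one, Matrix.cons_val_two, Matrix.cons_val_three,
    Matrix.cons_val_four]
  linear_combination (4*a^2*b^2 + 4*a^2*c^2 + 4*b^2*c^2 + (a^2-b^2)^2) * hs

lemma ver_inner (a b c d e f : ℝ) :
    ∑ i, (ver a b c) i * (ver d e f) i
      = 6*(a*d+b*e+c*f)^2 - 2*(a^2+b^2+c^2)*(d^2+e^2+f^2) := by
  have hs : Real.sqrt 3 ^ 2 = 3 := Real.sq_sqrt (by norm_num)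
  simp only [Fin.sum_univ_five, ver, PiLp.toLp_apply]
  norm_num [Matrix.cons_val_zero, Matrix.cons_val_one, Matrix.cons_val_two, Matrix.cons_val_three,
    Matrix.cons_val_four]
  linear_combination (4*a*b*d*e + 4*a*c*d*f + 4*b*c*e*f + (a^2-b^2)*(d^2-e^2)) * hs

lemma ball_inter_ball (p q : E5) :
    (closedBall p 1 ∩ closedBall q 1).Nonempty ↔ dist p q ≤ 2 := by
  constructor
  · rintro ⟨z, hz1, hz2⟩
    simp only [mem_closedBall] at hz1 hz2
    have := dist_triangle p z q
    rw [dist_comm p z] at this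
    linarith
  · intro h
    refine ⟨midpoint ℝ p q, ?_, ?_⟩
    · simp only [mem_closedBall, dist_comm (midpoint ℝ p q) p]
      rw [dist_left_midpoint]
      simp only [Real.norm_ofNat]
      linarith
    · simp only [mem_closedBall]
      rw [dist_comm, dist_right_midpoint]
      simp only [Real.norm_ofNat]
      linarith

lemma key_dist (a b c d e f : ℝ) (ha : a^2+b^2+c^2 ≠ 0) (hb : d^2+e^2+f^2 ≠ 0) :
    dist ((a^2+b^2+c^2)⁻¹ • ver a b c) (-((d^2+e^2+f^2)⁻¹ • ver d e f))
      = Real.sqrt (4 + 12*(a*d+b*e+c*f)^2/((a^2+b^2+c^2)*(d^2+e^2+f^2))) := by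
  set Qx := a^2+b^2+c^2
  set Qu := d^2+e^2+f^2
  rw [EuclideanSpace.dist_eq]
  congr 1
  have h1 : ∀ i : Fin 5, dist ((Qx⁻¹ • ver a b c) i) ((-(Qu⁻¹ • ver d e f)) i) ^ 2
      = Qx⁻¹^2 * ((ver a b c) i)^2 + 2*(Qx⁻¹*Qu⁻¹)*((ver a b c) i * (ver d e f) i)
        + Qu⁻¹^2 * ((ver d e f) i)^2 := by
    intro i
    have h3 : ((Qx⁻¹ • ver a b c) i) = Qx⁻¹ * (ver a b c) i := rfl
    have h2 : ((-(Qu⁻¹ • ver d e f)) i) = -(Qu⁻¹ * (ver d e f) i) := rfl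
    rw [Real.dist_eq, sq_abs, h3, h2]
    ring
  rw [Finset.sum_congr rfl (fun i _ => h1 i)]
  rw [Finset.sum_add_distrib, Finset.sum_add_distrib, ← Finset.mul_sum, ← Finset.mul_sum,
    ← Finset.mul_sum, ver_normsq, ver_inner, ver_normsq]
  field_simp
  ring

/-- distance = 2 in the orthogonal case -/
lemma key_dist_orth (a b c d e f : ℝ) (ha : a^2+b^2+c^2 ≠ 0) (hb : d^2+e^2+f^2 ≠ 0)
    (ht : a*d+b*e+c*f = 0) :
    dist ((a^2+b^2+c^2)⁻¹ • ver a b c) (-((d^2+e^2+f^2)⁻¹ • ver d e f)) = 2 := by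
  rw [key_dist a b c d e f ha hb, ht]
  norm_num

/-- closeness implies orthogonality -/
lemma key_orth (a b c d e f : ℝ) (ha : 0 < a^2+b^2+c^2) (hb : 0 < d^2+e^2+f^2)
    (h : dist ((a^2+b^2+c^2)⁻¹ • ver a b c) (-((d^2+e^2+f^2)⁻¹ • ver d e f)) ≤ 2) :
    a*d+b*e+c*f = 0 := by
  rw [key_dist a b c d e f ha.ne' hb.ne'] at h
  have hQ : 0 < (a^2+b^2+c^2)*(d^2+e^2+f^2) := mul_pos ha hb
  have h2 : 12*(a*d+b*e+c*f)^2/((a^2+b^2+c^2)*(d^2+e^2+f^2)) ≤ 0 := by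
    by_contra hcon
    push_neg at hcon
    have : Real.sqrt 4 < Real.sqrt (4 + 12*(a*d+b*e+c*f)^2/((a^2+b^2+c^2)*(d^2+e^2+f^2))) := by
      apply Real.sqrt_lt_sqrt (by norm_num)
      linarith
    rw [show (4:ℝ) = 2^2 by norm_num, Real.sqrt_sq (by norm_num : (0:ℝ) ≤ 2)] at this
    linarith
  have h3 : 0 ≤ 12*(a*d+b*e+c*f)^2/((a^2+b^2+c^2)*(d^2+e^2+f^2)) := by positivity
  have h4 : 12*(a*d+b*e+c*f)^2/((a^2+b^2+c^2)*(d^2+e^2+f^2)) = 0 := le_antisymm h2 h3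
  have h5 : (a*d+b*e+c*f)^2 = 0 := by
    field_simp at h4
    linarith [h4]
  exact pow_eq_zero_iff (by norm_num) |>.mp h5

/-- norm of real centers is 2 -/
lemma norm_center (a b c : ℝ) (ha : a^2+b^2+c^2 ≠ 0) :
    ‖(a^2+b^2+c^2)⁻¹ • ver a b c‖ = 2 := by
  set Qx := a^2+b^2+c^2 with hQ
  rw [EuclideanSpace.norm_eq]
  have h1 : ∀ i : Fin 5, ‖(Qx⁻¹ • ver a b c) i‖^2 = Qx⁻¹^2 * ((ver a b c) i)^2 := by
    intro i
    have h3 : ((Qx⁻¹ • ver a b c) i) = Qx⁻¹ * (ver a b c) i := rfl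
    rw [Real.norm_eq_abs, sq_abs, h3]; ring
  rw [Finset.sum_congr rfl (fun i _ => h1 i), ← Finset.mul_sum, ver_normsq]
  rw [show Qx⁻¹ ^ 2 * (4 * Qx^2) = 2^2 by field_simp; ring]
  exact Real.sqrt_sq (by norm_num)

def single1 (r : ℝ) : E5 := r • EuclideanSpace.single (0 : Fin 5) (1:ℝ)

lemma norm_single1 (r : ℝ) : ‖single1 r‖ = |r| := by
  rw [single1, norm_smul, EuclideanSpace.norm_single]
  simp [Real.norm_eq_abs]

lemma dist_single1 (r s : ℝ) : dist (single1 r) (single1 s) = |r - s| := by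
  rw [dist_eq_norm, single1, single1, ← sub_smul]
  exact norm_single1 (r - s)

def Pr (k i : ℕ) : ℝ := (i / (2*k^2) : ℕ) + 1
def Qr (k i : ℕ) : ℝ := (i % (2*k^2) : ℕ) + 1
def Mb (k j : ℕ) : ℝ := (j / k^2 : ℕ) + 1
def Cb (k j : ℕ) : ℝ := (j % k^2 : ℕ) + 1

def redV (k i : ℕ) : E5 := ((Pr k i)^2+(Qr k i)^2+(1:ℝ)^2)⁻¹ • ver (Pr k i) (Qr k i) 1
def blueV (k j : ℕ) : E5 :=
  -(((Mb k j)^2+(-1:ℝ)^2+(Cb k j)^2)⁻¹ • ver (Mb k j) (-1) (Cb k j))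

lemma Qx_pos (k i : ℕ) : (0:ℝ) < (Pr k i)^2+(Qr k i)^2+(1:ℝ)^2 := by positivity
lemma Qu_pos (k j : ℕ) : (0:ℝ) < (Mb k j)^2+(-1:ℝ)^2+(Cb k j)^2 := by
  have := sq_nonneg (Mb k j); have := sq_nonneg (Cb k j); norm_num; linarith

lemma norm_redV (k i : ℕ) : ‖redV k i‖ = 2 := norm_center _ _ _ (Qx_pos k i).ne'
lemma norm_blueV (k j : ℕ) : ‖blueV k j‖ = 2 := by
  rw [blueV, norm_neg]; exact norm_center _ _ _ (Qu_pos k j).ne'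

def redC (n k : ℕ) (i : Fin n) : E5 :=
  if i.val < 2*k^3 then redV k i.val else single1 (10 + i.val)
def blueC (n k : ℕ) (j : Fin n) : E5 :=
  if j.val < k^3 then blueV k j.val else single1 (-(10 + j.val))

def Rf (n k : ℕ) (i : Fin n) : Set E5 := closedBall (redC n k i) 1
def Bf (n k : ℕ) (j : Fin n) : Set E5 := closedBall (blueC n k j) 1

lemma dummy_far (x : E5) (hx : ‖x‖ = 2) (r : ℝ) (hr : 8 ≤ |r|) :
    ¬ dist x (single1 r) ≤ 2 := by
  intro h
  have h1 : ‖single1 r‖ - ‖x‖ ≤ ‖single1 r - x‖ := norm_sub_norm_le _ _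
  rw [← dist_eq_norm, dist_comm, norm_single1, hx] at h1
  linarith

lemma inter_char (n k : ℕ) (i j : Fin n) :
    ((Rf n k i) ∩ (Bf n k j)).Nonempty ↔
      (i.val < 2*k^3 ∧ j.val < k^3 ∧
        Pr k i * Mb k j + Qr k i * (-1) + 1 * Cb k j = 0) := by
  rw [Rf, Bf, ball_inter_ball, redC, blueC]
  by_cases hi : i.val < 2*k^3 <;> by_cases hj : j.val < k^3 <;>
      simp only [hi, hj, if_true, if_false, true_and, false_and, iff_false]
  · -- both real
    constructor
    · intro h
      exact key_orth _ _ _ _ _ _ (Qx_pos k i) (Qu_pos k j) h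
    · intro ht
      rw [redV, blueV, key_dist_orth _ _ _ _ _ _ (Qx_pos k i).ne' (Qu_pos k j).ne' ht]
  · -- red real, blue dummy
    apply dummy_far _ (norm_redV k i) _ ?_
    have h0 : (0:ℝ) ≤ 10 + (j:ℕ) := by positivity
    rw [abs_neg, abs_of_nonneg h0]
    linarith
  · -- red dummy, blue real
    rw [dist_comm]
    apply dummy_far _ (norm_blueV k j) _ ?_
    have h0 : (0:ℝ) ≤ 10 + (i:ℕ) := by positivity
    rw [abs_of_nonneg h0]
    linarith
  · -- both dummy
    rw [dist_single1]
    intro h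
    have h0 : (0:ℝ) ≤ (i:ℕ) := by positivity
    have h1 : (0:ℝ) ≤ (j:ℕ) := by positivity
    rw [abs_of_nonneg (by linarith)] at h
    linarith

lemma red_eq (k i i' : ℕ) (h1 : Pr k i = Pr k i') (h2 : Qr k i = Qr k i') : i = i' := by
  rw [Pr, Pr] at h1; rw [Qr, Qr] at h2
  have e1 : i / (2*k^2) = i' / (2*k^2) := by
    exact_mod_cast (by linarith : ((i / (2*k^2) : ℕ):ℝ) = ((i' / (2*k^2) : ℕ):ℝ))
  have e2 : i % (2*k^2) = i' % (2*k^2) := by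
    exact_mod_cast (by linarith : ((i % (2*k^2) : ℕ):ℝ) = ((i' % (2*k^2) : ℕ):ℝ))
  have d1 := Nat.div_add_mod i (2*k^2)
  have d2 := Nat.div_add_mod i' (2*k^2)
  rw [e1, e2] at d1
  omega

lemma blue_eq (k j j' : ℕ) (h1 : Mb k j = Mb k j') (h2 : Cb k j = Cb k j') : j = j' := by
  rw [Mb, Mb] at h1; rw [Cb, Cb] at h2
  have e1 : j / k^2 = j' / k^2 := by
    exact_mod_cast (by linarith : ((j / k^2 : ℕ):ℝ) = ((j' / k^2 : ℕ):ℝ))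
  have e2 : j % k^2 = j' % k^2 := by
    exact_mod_cast (by linarith : ((j % k^2 : ℕ):ℝ) = ((j' % k^2 : ℕ):ℝ))
  have d1 := Nat.div_add_mod j (k^2)
  have d2 := Nat.div_add_mod j' (k^2)
  rw [e1, e2] at d1
  omega

lemma no_k22 (n k : ℕ) :
    ¬ ∃ i i' j j' : Fin n, i ≠ i' ∧ j ≠ j' ∧
      ((Rf n k i) ∩ (Bf n k j)).Nonempty ∧ ((Rf n k i) ∩ (Bf n k j')).Nonempty ∧
      ((Rf n k i') ∩ (Bf n k j)).Nonempty ∧ ((Rf n k i') ∩ (Bf n k j')).Nonempty := by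
  rintro ⟨i, i', j, j', hii, hjj, h1, h2, h3, h4⟩
  rw [inter_char] at h1 h2 h3 h4
  have e1 := h1.2.2; have e2 := h2.2.2; have e3 := h3.2.2; have e4 := h4.2.2
  by_cases hP : Pr k i = Pr k i'
  · rw [hP] at e1
    have hQ : Qr k i = Qr k i' := by linarith
    exact hii (Fin.val_injective (red_eq k i i' hP hQ))
  · have h5 : (Mb k j - Mb k j') * (Pr k i - Pr k i') = 0 := by
      linear_combination e1 - e2 - e3 + e4
    have hM : Mb k j = Mb k j' := by
      rcases mul_eq_zero.mp h5 with h6 | h6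
      · linarith
      · exact absurd (by linarith : Pr k i = Pr k i') hP
    have hC : Cb k j = Cb k j' := by linear_combination e1 - e2 - Pr k i * hM
    exact hjj (Fin.val_injective (blue_eq k j j' hM hC))

def idxR (k p m c : ℕ) : ℕ := 2*k^2*p + ((m+1)*(p+1)+c)
def idxB (k m c : ℕ) : ℕ := k^2*m + c

lemma q_lt (k p m c : ℕ) (hp : p < k) (hm : m < k) (hc : c < k^2) :
    (m+1)*(p+1)+c < 2*k^2 := by
  have h1 : (m+1)*(p+1) ≤ k*k := Nat.mul_le_mul hm hp
  have : k*k = k^2 := by ring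
  omega

lemma idxR_lt (k p m c : ℕ) (hp : p < k) (hm : m < k) (hc : c < k^2) :
    idxR k p m c < 2*k^3 := by
  have h1 := q_lt k p m c hp hm hc
  have h2 : 2*k^2*p + 2*k^2 ≤ 2*k^3 := by nlinarith
  rw [idxR]; omega

lemma idxB_lt (k m c : ℕ) (hm : m < k) (hc : c < k^2) : idxB k m c < k^3 := by
  have h2 : k^2*m + k^2 ≤ k^3 := by nlinarith
  rw [idxB]; omega

lemma decodeR_P (k p m c : ℕ) (hk : 0 < k) (hp : p < k) (hm : m < k) (hc : c < k^2) :
    Pr k (idxR k p m c) = (p:ℝ)+1 := by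
  rw [Pr, idxR, Nat.mul_add_div (by positivity), Nat.div_eq_of_lt (q_lt k p m c hp hm hc)]
  norm_num

lemma decodeR_Q (k p m c : ℕ) (hp : p < k) (hm : m < k) (hc : c < k^2) :
    Qr k (idxR k p m c) = ((m+1)*(p+1)+c : ℕ)+1 := by
  rw [Qr, idxR, Nat.mul_add_mod, Nat.mod_eq_of_lt (q_lt k p m c hp hm hc)]

lemma decodeB_M (k m c : ℕ) (hk : 0 < k) (hc : c < k^2) :
    Mb k (idxB k m c) = (m:ℝ)+1 := by
  rw [Mb, idxB, Nat.mul_add_div (by positivity), Nat.div_eq_of_lt hc]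
  norm_num

lemma decodeB_C (k m c : ℕ) (hc : c < k^2) :
    Cb k (idxB k m c) = (c:ℝ)+1 := by
  rw [Cb, idxB, Nat.mul_add_mod, Nat.mod_eq_of_lt hc]

lemma adj_iff {n : ℕ} (R B : Fin n → Set E5) (i j : Fin n) :
    (biIntersectionGraph R B).Adj (Sum.inl i) (Sum.inr j) ↔ (R i ∩ B j).Nonempty := by
  simp [biIntersectionGraph, SimpleGraph.fromRel_adj]

lemma card_edges {n : ℕ} (R B : Fin n → Set E5) {α : Type} [Fintype α]
    (f : α → Sym2 (Fin n ⊕ Fin n)) (hinj : Function.Injective f)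
    (hmem : ∀ a, f a ∈ (biIntersectionGraph R B).edgeSet) :
    Fintype.card α ≤ (biIntersectionGraph R B).edgeSet.ncard := by
  let f' : α → ↥(biIntersectionGraph R B).edgeSet := fun a => ⟨f a, hmem a⟩
  have hinj' : Function.Injective f' := by
    intro a b h
    exact hinj (congrArg Subtype.val h)
  calc Fintype.card α = Nat.card α := (Nat.card_eq_fintype_card).symm
    _ ≤ Nat.card ↥(biIntersectionGraph R B).edgeSet := Nat.card_le_card_of_injective f' hinj'
    _ = (biIntersectionGraph R B).edgeSet.ncard := (Nat.card_coe_set_eq _)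

lemma edges_lower (n k : ℕ) (hk : 0 < k) (hn : 2*k^3 ≤ n) :
    k^4 ≤ (biIntersectionGraph (Rf n k) (Bf n k)).edgeSet.ncard := by
  have hR : ∀ (p m : Fin k) (c : Fin (k^2)), idxR k p m c < n :=
    fun p m c => lt_of_lt_of_le (idxR_lt k p m c p.2 m.2 c.2) hn
  have hB : ∀ (m : Fin k) (c : Fin (k^2)), idxB k m c < n := by
    intro m c
    have := idxB_lt k m c m.2 c.2
    have h2 : k^3 ≤ 2*k^3 := by omega
    omega
  set G := biIntersectionGraph (Rf n k) (Bf n k) with hG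
  have key : ∀ (t : Fin k × Fin k × Fin (k^2)),
      s(Sum.inl (⟨idxR k t.1 t.2.1 t.2.2, hR t.1 t.2.1 t.2.2⟩ : Fin n),
        Sum.inr (⟨idxB k t.2.1 t.2.2, hB t.2.1 t.2.2⟩ : Fin n))
        ∈ G.edgeSet := by
    rintro ⟨p, m, c⟩
    rw [SimpleGraph.mem_edgeSet, hG, adj_iff, inter_char]
    refine ⟨idxR_lt k p m c p.2 m.2 c.2, idxB_lt k m c m.2 c.2, ?_⟩
    rw [decodeR_P k p m c hk p.2 m.2 c.2, decodeR_Q k p m c p.2 m.2 c.2,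
      decodeB_M k m c hk c.2, decodeB_C k m c c.2]
    push_cast
    ring
  have hinj : Function.Injective (fun t : Fin k × Fin k × Fin (k^2) =>
      s(Sum.inl (⟨idxR k t.1 t.2.1 t.2.2, hR t.1 t.2.1 t.2.2⟩ : Fin n),
        Sum.inr (⟨idxB k t.2.1 t.2.2, hB t.2.1 t.2.2⟩ : Fin n))) := by
    rintro ⟨p, m, c⟩ ⟨p', m', c'⟩ h
    simp only [Sym2.eq_iff] at h
    rcases h with ⟨h1, h2⟩ | ⟨h1, h2⟩
    · have hi : idxR k p m c = idxR k p' m' c' := by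
        have := Sum.inl.inj h1; exact Fin.mk.inj_iff.mp this
      have hj : idxB k m c = idxB k m' c' := by
        have := Sum.inr.inj h2; exact Fin.mk.inj_iff.mp this
      have hm : (m:ℕ) = m' := by
        have a1 : (idxB k m c) / k^2 = (m:ℕ) := by
          rw [idxB, Nat.mul_add_div (by positivity), Nat.div_eq_of_lt c.2]; omega
        have a2 : (idxB k m' c') / k^2 = (m':ℕ) := by
          rw [idxB, Nat.mul_add_div (by positivity), Nat.div_eq_of_lt c'.2]; omega
        rw [← a1, ← a2, hj]
      have hc : (c:ℕ) = c' := by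
        rw [idxB, idxB, hm] at hj
        omega
      have hp : (p:ℕ) = p' := by
        have a1 : (idxR k p m c) / (2*k^2) = (p:ℕ) := by
          rw [idxR, Nat.mul_add_div (by positivity),
            Nat.div_eq_of_lt (q_lt k p m c p.2 m.2 c.2)]; omega
        have a2 : (idxR k p' m' c') / (2*k^2) = (p':ℕ) := by
          rw [idxR, Nat.mul_add_div (by positivity),
            Nat.div_eq_of_lt (q_lt k p' m' c' p'.2 m'.2 c'.2)]; omega
        rw [← a1, ← a2, hi]
      exact Prod.ext (Fin.ext hp) (Prod.ext (Fin.ext hm) (Fin.ext hc))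
    · exact absurd h1 (by simp)
  have := card_edges (Rf n k) (Bf n k) _ hinj key
  calc k^4 = Fintype.card (Fin k × Fin k × Fin (k^2)) := by
        simp [Fintype.card_prod]; ring
    _ ≤ _ := this

/-! matching construction for small n -/

def mR (n : ℕ) (i : Fin n) : Set E5 := closedBall (single1 (4*i.val)) 1
def mB (n : ℕ) (j : Fin n) : Set E5 := closedBall (single1 (4*j.val)) 1

lemma m_inter (n : ℕ) (i j : Fin n) : ((mR n i) ∩ (mB n j)).Nonempty ↔ i = j := by
  rw [mR, mB, ball_inter_ball, dist_single1]
  constructor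
  · intro h
    rw [abs_le] at h
    by_contra hij
    rcases Nat.lt_or_ge (i:ℕ) (j:ℕ) with hlt | hge
    · have : ((i:ℕ):ℝ) + 1 ≤ ((j:ℕ):ℝ) := by exact_mod_cast hlt
      linarith [h.1, h.2]
    · have hlt' : (j:ℕ) < (i:ℕ) := by
        rcases Nat.lt_or_ge (j:ℕ) (i:ℕ) with h' | h'
        · exact h'
        · exact absurd (Fin.ext (Nat.le_antisymm hge h')) (fun hc => hij hc.symm)
      have : ((j:ℕ):ℝ) + 1 ≤ ((i:ℕ):ℝ) := by exact_mod_cast hlt'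
      linarith [h.1, h.2]
  · rintro rfl
    simp

lemma m_no_k22 (n : ℕ) :
    ¬ ∃ i i' j j' : Fin n, i ≠ i' ∧ j ≠ j' ∧
      ((mR n i) ∩ (mB n j)).Nonempty ∧ ((mR n i) ∩ (mB n j')).Nonempty ∧
      ((mR n i') ∩ (mB n j)).Nonempty ∧ ((mR n i') ∩ (mB n j')).Nonempty := by
  rintro ⟨i, i', j, j', hii, hjj, h1, h2, h3, h4⟩
  rw [m_inter] at h1 h2
  exact hjj (h1.symm.trans h2)

lemma m_edges (n : ℕ) : n ≤ (biIntersectionGraph (mR n) (mB n)).edgeSet.ncard := by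
  have key : ∀ i : Fin n, s(Sum.inl i, Sum.inr i)
      ∈ (biIntersectionGraph (mR n) (mB n)).edgeSet := by
    intro i
    rw [SimpleGraph.mem_edgeSet, adj_iff, m_inter]
  have hinj : Function.Injective (fun i : Fin n => s(Sum.inl i, Sum.inr i) :
      Fin n → Sym2 (Fin n ⊕ Fin n)) := by
    intro a b h
    simp only [Sym2.eq_iff] at h
    rcases h with ⟨h1, h2⟩ | ⟨h1, h2⟩
    · exact Sum.inl.inj h1
    · exact absurd h1 (by simp)
  have := card_edges (mR n) (mB n) _ hinj key
  simpa using this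

/-! numeric facts -/

lemma rpow_third_cube (x : ℝ) (hx : 0 ≤ x) : (x ^ ((1:ℝ)/3))^(3:ℕ) = x := by
  rw [← Real.rpow_natCast (x ^ ((1:ℝ)/3)) 3, ← Real.rpow_mul hx]; norm_num

lemma rpow_third_pow4 (x : ℝ) (hx : 0 ≤ x) : (x ^ ((1:ℝ)/3))^(4:ℕ) = x ^ ((4:ℝ)/3) := by
  rw [← Real.rpow_natCast (x ^ ((1:ℝ)/3)) 4, ← Real.rpow_mul hx]; norm_num

lemma h64cube : (64:ℝ)^((1:ℝ)/3) = 4 := by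
  rw [show (64:ℝ) = 4^(3:ℕ) by norm_num, ← Real.rpow_natCast (4:ℝ) 3,
    ← Real.rpow_mul (by norm_num)]
  norm_num

lemma grid_facts (n : ℕ) (h64 : 64 ≤ n) :
    1 ≤ ⌊(n:ℝ)^((1:ℝ)/3)/2⌋₊ ∧ 2*(⌊(n:ℝ)^((1:ℝ)/3)/2⌋₊)^3 ≤ n ∧
      (n:ℝ)^((4:ℝ)/3) ≤ 256*((⌊(n:ℝ)^((1:ℝ)/3)/2⌋₊ : ℕ):ℝ)^4 := by
  set k := ⌊(n:ℝ)^((1:ℝ)/3)/2⌋₊ with hk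
  set y := (n:ℝ)^((1:ℝ)/3) with hy
  have hn0 : (0:ℝ) ≤ n := by positivity
  have hy0 : 0 ≤ y := by positivity
  have hy4 : 4 ≤ y := by
    rw [← h64cube, hy]
    apply Real.rpow_le_rpow (by norm_num) (by exact_mod_cast h64) (by norm_num)
  have hkle : (k:ℝ) ≤ y/2 := Nat.floor_le (by positivity)
  have hkgt : y/2 < (k:ℝ) + 1 := Nat.lt_floor_add_one _
  have hklb : y/4 ≤ (k:ℝ) := by linarith
  have hk1 : 1 ≤ k := by
    have : (1:ℝ) ≤ (k:ℝ) := by linarith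
    exact_mod_cast this
  refine ⟨hk1, ?_, ?_⟩
  · have h1 : (k:ℝ)^3 ≤ (y/2)^3 := by
      apply pow_le_pow_left₀ (by positivity) hkle
    have h2 : (y/2)^3 = (n:ℝ)/8 := by
      have := rpow_third_cube (n:ℝ) hn0
      rw [← hy] at this
      field_simp
      linarith [this]
    have h3 : (2:ℝ)*(k:ℝ)^3 ≤ n := by rw [h2] at h1; linarith
    exact_mod_cast (by push_cast; linarith : ((2*k^3 : ℕ):ℝ) ≤ (n:ℝ))
  · have h1 : (y/4)^4 ≤ (k:ℝ)^4 := pow_le_pow_left₀ (by positivity) hklb 4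
    have h2 : y^(4:ℕ) = (n:ℝ)^((4:ℝ)/3) := rpow_third_pow4 (n:ℝ) hn0
    nlinarith [h1, h2]

lemma small_bound (n : ℕ) (hn : 0 < n) (h64 : n < 64) :
    (1/256:ℝ) * (n:ℝ)^((4:ℝ)/3) ≤ n := by
  have hn0 : (0:ℝ) < n := by exact_mod_cast hn
  have h1 : (n:ℝ)^((4:ℝ)/3) = n * (n:ℝ)^((1:ℝ)/3) := by
    rw [show (4:ℝ)/3 = 1 + 1/3 by norm_num, Real.rpow_add hn0, Real.rpow_one]
  have h2 : (n:ℝ)^((1:ℝ)/3) ≤ 4 := by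
    rw [← h64cube]
    apply Real.rpow_le_rpow (by positivity) (by exact_mod_cast h64.le) (by norm_num)
  have h3 : (0:ℝ) ≤ (n:ℝ)^((1:ℝ)/3) := by positivity
  rw [h1]
  nlinarith

end Aux15

end Aux15

theorem stmt_15 :
    ∃ c : ℝ, 0 < c ∧ ∀ n : ℕ, 0 < n →
      ∃ R B : Fin n → Set (EuclideanSpace ℝ (Fin 5)),
        (∀ i, IsUnitBall (R i)) ∧ (∀ j, IsUnitBall (B j)) ∧
        (¬ ∃ i i' j j' : Fin n, i ≠ i' ∧ j ≠ j' ∧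
          (R i ∩ B j).Nonempty ∧ (R i ∩ B j').Nonempty ∧
          (R i' ∩ B j).Nonempty ∧ (R i' ∩ B j').Nonempty) ∧
        c * (n : ℝ) ^ ((4 : ℝ) / 3) ≤ ((biIntersectionGraph R B).edgeSet.ncard : ℝ) := by
  refine ⟨1/256, by norm_num, ?_⟩
  intro n hn
  by_cases h64 : 64 ≤ n
  · obtain ⟨hk1, hk3, hk4⟩ := Aux15.grid_facts n h64
    set k := ⌊(n:ℝ)^((1:ℝ)/3)/2⌋₊ with hk
    refine ⟨Aux15.Rf n k, Aux15.Bf n k, fun i => ⟨_, rfl⟩, fun j => ⟨_, rfl⟩,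
      Aux15.no_k22 n k, ?_⟩
    have hcard := Aux15.edges_lower n k hk1 hk3
    have hc : ((k^4 : ℕ):ℝ) ≤ ((biIntersectionGraph (Aux15.Rf n k) (Aux15.Bf n k)).edgeSet.ncard : ℝ) :=
      Nat.cast_le.mpr hcard
    push_cast at hc
    linarith
  · push_neg at h64
    refine ⟨Aux15.mR n, Aux15.mB n, fun i => ⟨_, rfl⟩, fun j => ⟨_, rfl⟩,
      Aux15.m_no_k22 n, ?_⟩
    have hcard := Aux15.m_edges n
    have hc : ((n : ℕ):ℝ) ≤ ((biIntersectionGraph (Aux15.mR n) (Aux15.mB n)).edgeSet.ncard : ℝ) :=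
      Nat.cast_le.mpr hcard
    have := Aux15.small_bound n hn h64
    linarith
end

section
/- For every integer d ≥ 3 there exists a constant c > 0 such that for every integer n ≥ 3 there exists an indexed family of n axis-aligned boxes in ℝ^d whose intersection graph G is bipartite, contains no K_{2,2} (there do not exist four distinct vertices a, b, x, y such that each of a and b is adjacent in G to each of x and y), and has at least c·n·(log n / log log n)^{d−2} edges. -/
/-- An axis-aligned box in `ℝ^d`: a product of `d` nonempty closed intervals. -/
def IsBox {d : ℕ} (s : Set (EuclideanSpace ℝ (Fin d))) : Prop :=
  ∃ a b : Fin d → ℝ, (∀ i, a i ≤ b i) ∧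
    s = {x : EuclideanSpace ℝ (Fin d) | ∀ i, x i ∈ Set.Icc (a i) (b i)}

/-- The intersection graph of an indexed family of sets: distinct indices `i`, `j`
are adjacent iff `O i ∩ O j ≠ ∅`. -/
def intersectionGraph {α : Type*} {n : ℕ} (O : Fin n → Set α) : SimpleGraph (Fin n) :=
  SimpleGraph.fromRel (fun i j => (O i ∩ O j).Nonempty)


open Finset Polynomial

namespace S16

/-- little-endian digit sum bound -/
lemma geom_bound (b t : ℕ) (hb : 1 ≤ b) (e : ℕ → ℕ) (he : ∀ i, e i < b) :
    ∑ i ∈ range t, e i * b ^ i < b ^ t := by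
  induction t with
  | zero => simp
  | succ t ih =>
    rw [sum_range_succ, pow_succ]
    have h1 : e t ≤ b - 1 := by have := he t; omega
    have h2 : e t * b ^ t ≤ (b-1) * b ^ t := Nat.mul_le_mul_right _ h1
    have h3 : 0 < b ^ t := Nat.pow_pos (by omega)
    have h4 : (b-1) * b ^ t + b ^ t = b ^ t * b := by
      cases b with
      | zero => omega
      | succ b => simp [Nat.succ_sub_one]; ring
    omega

lemma digits_unique (b : ℕ) (hb : 1 ≤ b) : ∀ (t : ℕ) (e e' : ℕ → ℕ), (∀ i, e i < b) →
    (∀ i, e' i < b) → (∑ i ∈ range t, e i * b ^ i = ∑ i ∈ range t, e' i * b ^ i) →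
    ∀ i < t, e i = e' i := by
  intro t
  induction t with
  | zero => intro e e' _ _ _ i hi; omega
  | succ t ih =>
    intro e e' he he' hsum i hi
    rw [sum_range_succ', sum_range_succ'] at hsum
    simp only [pow_succ, pow_zero, one_mul] at hsum
    have hA : ∑ i ∈ range t, e (i+1) * (b ^ i * b) = (∑ i ∈ range t, e (i+1) * b ^ i) * b := by
      rw [sum_mul]; congr 1; ext i; ring
    have hA' : ∑ i ∈ range t, e' (i+1) * (b ^ i * b) = (∑ i ∈ range t, e' (i+1) * b ^ i) * b := by
      rw [sum_mul]; congr 1; ext i; ring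
    rw [hA, hA'] at hsum
    have h0 : e 0 = e' 0 := by
      rw [mul_comm (∑ i ∈ range t, e (i + 1) * b ^ i) b,
        mul_comm (∑ i ∈ range t, e' (i + 1) * b ^ i) b] at hsum
      have := congrArg (· % b) hsum
      simp only [mul_one] at this
      rwa [Nat.mul_add_mod, Nat.mul_add_mod, Nat.mod_eq_of_lt (he 0),
        Nat.mod_eq_of_lt (he' 0)] at this
    have hrest : ∑ i ∈ range t, e (i+1) * b ^ i = ∑ i ∈ range t, e' (i+1) * b ^ i := by
      have hb0 : 0 < b := hb
      rw [h0] at hsum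
      simp only [mul_one] at hsum
      have := Nat.add_right_cancel hsum
      exact Nat.eq_of_mul_eq_mul_right hb0 this
    rcases i with _ | i
    · exact h0
    · exact ih (fun i => e (i+1)) (fun i => e' (i+1)) (fun i => he _) (fun i => he' _) hrest i (by omega)



variable (b k : ℕ)

/-- polynomial with coefficients f -/
noncomputable def pol (f : Fin k → ZMod b) : (ZMod b)[X] := ∑ i : Fin k, C (f i) * X ^ (i : ℕ)

/-- digit r (from the top) of the coordinate of point f at evaluation point a -/
noncomputable def w (f : Fin k → ZMod b) (a : ZMod b) (r : ℕ) : ℕ :=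
  ((taylor a (pol b k f)).coeff r).val

/-- value of the top-c-digit prefix -/
noncomputable def Pre (f : Fin k → ZMod b) (a : ZMod b) (c : ℕ) : ℕ :=
  ∑ r ∈ range c, w b k f a r * b ^ (c - 1 - r)

lemma w_lt [NeZero b] (f : Fin k → ZMod b) (a : ZMod b) (r : ℕ) : w b k f a r < b :=
  ZMod.val_lt _

lemma bigendian_lt (hb : 1 ≤ b) (t : ℕ) (e : ℕ → ℕ) (he : ∀ i, e i < b) :
    ∑ r ∈ range t, e r * b ^ (t - 1 - r) < b ^ t := by
  have h := sum_range_reflect (fun j => e (t - 1 - j) * b ^ j) t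
  have h2 : ∀ r ∈ range t, e (t - 1 - (t - 1 - r)) * b ^ (t - 1 - r) = e r * b ^ (t - 1 - r) := by
    intro r hr
    rw [mem_range] at hr
    congr 2
    omega
  rw [sum_congr rfl h2] at h
  rw [h]
  exact geom_bound b t hb _ (fun i => he _)

lemma bigendian_unique (hb : 1 ≤ b) (t : ℕ) (e e' : ℕ → ℕ) (he : ∀ i, e i < b)
    (he' : ∀ i, e' i < b)
    (h : ∑ r ∈ range t, e r * b ^ (t - 1 - r) = ∑ r ∈ range t, e' r * b ^ (t - 1 - r)) :
    ∀ r < t, e r = e' r := by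
  have conv : ∀ (u : ℕ → ℕ), ∑ r ∈ range t, u r * b ^ (t - 1 - r)
      = ∑ j ∈ range t, u (t - 1 - j) * b ^ j := by
    intro u
    have h := sum_range_reflect (fun j => u (t - 1 - j) * b ^ j) t
    rw [← h]
    refine sum_congr rfl (fun r hr => ?_)
    rw [mem_range] at hr
    congr 2
    omega
  rw [conv e, conv e'] at h
  have := digits_unique b hb t (fun j => e (t-1-j)) (fun j => e' (t-1-j))
    (fun i => he _) (fun i => he' _) h
  intro r hr
  have := this (t - 1 - r) (by omega)
  have hrr : t - 1 - (t - 1 - r) = r := by omega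
  simpa only [hrr] using this

lemma Pre_lt [NeZero b] (hb : 1 ≤ b) (f : Fin k → ZMod b) (a : ZMod b) (c : ℕ) :
    Pre b k f a c < b ^ c :=
  bigendian_lt b hb c _ (fun i => w_lt b k f a i)

/-- dividing the full value by b^(k-c) gives the prefix value -/
lemma Pre_div [NeZero b] (hb : 1 ≤ b) (f : Fin k → ZMod b) (a : ZMod b) (c : ℕ) (hc : c ≤ k) :
    Pre b k f a k / b ^ (k - c) = Pre b k f a c := by
  have hsplit : Pre b k f a k
      = Pre b k f a c * b ^ (k - c) + ∑ r ∈ Ico c k, w b k f a r * b ^ (k - 1 - r) := by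
    unfold Pre
    rw [range_eq_Ico, ← Finset.sum_Ico_consecutive _ (Nat.zero_le c) hc, sum_mul]
    congr 1
    rw [← range_eq_Ico]
    refine sum_congr rfl (fun r hr => ?_)
    rw [mem_range] at hr
    rw [mul_assoc, ← pow_add]
    congr 2
    omega
  have hR : ∑ r ∈ Ico c k, w b k f a r * b ^ (k - 1 - r) < b ^ (k - c) := by
    rw [Finset.sum_Ico_eq_sum_range]
    have : ∀ i ∈ range (k - c), w b k f a (c + i) * b ^ (k - 1 - (c + i))
        = (fun i => w b k f a (c + i)) i * b ^ ((k - c) - 1 - i) := by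
      intro i hi
      rw [mem_range] at hi
      congr 2
      omega
    rw [sum_congr rfl this]
    exact bigendian_lt b hb (k - c) _ (fun i => w_lt b k f a _)
  rw [hsplit]
  have hpos : 0 < b ^ (k - c) := Nat.pow_pos hb
  rw [add_comm, Nat.add_mul_div_right _ _ hpos, Nat.div_eq_of_lt hR, zero_add]

lemma pol_coeff (f : Fin k → ZMod b) (r : ℕ) (h : r < k) :
    (pol b k f).coeff r = f ⟨r, h⟩ := by
  unfold pol
  rw [finset_sum_coeff]
  rw [Finset.sum_eq_single (⟨r, h⟩ : Fin k)]
  · simp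
  · intro i _ hi
    rw [coeff_C_mul, coeff_X_pow, if_neg, mul_zero]
    intro hri
    exact hi (by ext; simp [← hri])
  · simp

lemma pol_coeff_ge (f : Fin k → ZMod b) (r : ℕ) (h : k ≤ r) :
    (pol b k f).coeff r = 0 := by
  unfold pol
  rw [finset_sum_coeff]
  refine Finset.sum_eq_zero (fun i _ => ?_)
  rw [coeff_C_mul, coeff_X_pow, if_neg, mul_zero]
  have := i.isLt
  omega

lemma pol_natDegree_le (f : Fin k → ZMod b) : (pol b k f).natDegree ≤ k - 1 := by
  refine natDegree_le_iff_coeff_eq_zero.mpr (fun N hN => ?_)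
  by_cases hk : 1 ≤ k
  · exact pol_coeff_ge b k f N (by omega)
  · have : k = 0 := by omega
    exact pol_coeff_ge b k f N (by omega)

lemma taylor_dvd {R : Type*} [CommRing R] (p : R[X]) (a : R) (m : ℕ)
    (h : X ^ m ∣ taylor a p) : (X - C a) ^ m ∣ p := by
  obtain ⟨q, hq⟩ := h
  rw [taylor_apply] at hq
  have hp : p = (p.comp (X + C a)).comp (X - C a) := by
    rw [comp_assoc]
    simp
  rw [hp, hq, mul_comp, pow_comp, X_comp]
  exact dvd_mul_right _ _

theorem key_inj [Fact (Nat.Prime b)] (hk : 1 ≤ k) {D : ℕ} (hD : D ≤ b) (c : Fin D → ℕ)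
    (hsum : k ≤ ∑ j, c j) (f g : Fin k → ZMod b)
    (h : ∀ (j : Fin D), ∀ r < c j,
      w b k f ((j : ℕ) : ZMod b) r = w b k g ((j : ℕ) : ZMod b) r) : f = g := by
  have hbprime : Nat.Prime b := Fact.out
  haveI : NeZero b := ⟨hbprime.pos.ne'⟩
  set p := pol b k f - pol b k g with hp
  have hcoeff : ∀ (j : Fin D), ∀ r < c j, (taylor ((j : ℕ) : ZMod b) p).coeff r = 0 := by
    intro j r hr
    rw [hp, map_sub, coeff_sub, sub_eq_zero]
    exact ZMod.val_injective b (h j r hr)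
  have hdvd : ∀ j : Fin D, (X - C ((j : ℕ) : ZMod b)) ^ (c j) ∣ p := by
    intro j
    refine taylor_dvd p _ _ (X_pow_dvd_iff.mpr (fun r hr => hcoeff j r hr))
  have hainj : Function.Injective (fun j : Fin D => ((j : ℕ) : ZMod b)) := by
    intro j j' hjj
    have h1 := congrArg ZMod.val hjj
    refine Fin.ext ?_
    simpa [ZMod.val_natCast_of_lt (lt_of_lt_of_le j.isLt hD),
      ZMod.val_natCast_of_lt (lt_of_lt_of_le j'.isLt hD)] using h1
  have hcop := Polynomial.pairwise_coprime_X_sub_C hainj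
  have hprod : (∏ j : Fin D, (X - C ((j : ℕ) : ZMod b)) ^ (c j)) ∣ p := by
    refine Finset.prod_dvd_of_coprime ?_ (fun j _ => hdvd j)
    intro i _ j _ hij
    exact (hcop hij).pow
  have hpz : p = 0 := by
    by_contra hpz
    have h1 := natDegree_le_of_dvd hprod hpz
    have h2 : (∏ j : Fin D, (X - C ((j : ℕ) : ZMod b)) ^ (c j)).natDegree = ∑ j, c j := by
      rw [natDegree_prod]
      · refine Finset.sum_congr rfl (fun j _ => ?_)
        rw [natDegree_pow, natDegree_X_sub_C, mul_one]
      · intro j _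
        exact pow_ne_zero _ (X_sub_C_ne_zero _)
    rw [h2] at h1
    have h3 := pol_natDegree_le b k f
    have h4 := pol_natDegree_le b k g
    have h5 : p.natDegree ≤ k - 1 := le_trans (natDegree_sub_le _ _) (by omega)
    omega
  funext i
  have := congrArg (fun q => Polynomial.coeff q (i : ℕ)) hpz
  simp only [hp, coeff_sub, coeff_zero, sub_eq_zero] at this
  rw [pol_coeff b k f _ i.isLt, pol_coeff b k g _ i.isLt] at this
  simpa using this




/-- helper: natural division characterization -/
lemma div_char (s q P : ℕ) (hs : 0 < s) : (q * s ≤ P ∧ P ≤ q * s + (s - 1)) ↔ P / s = q := by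
  constructor
  · rintro ⟨h1, h2⟩
    have hq : q ≤ P / s := (Nat.le_div_iff_mul_le hs).mpr h1
    have hq2 : P / s < q + 1 := by
      rw [Nat.div_lt_iff_lt_mul hs]
      have : (q+1) * s = q * s + s := by ring
      omega
    omega
  · rintro rfl
    have h1 := Nat.div_mul_le_self P s
    have h2 := Nat.div_add_mod P s
    have h3 := Nat.mod_lt P hs
    rw [mul_comm] at h2
    omega

lemma copy_sep {s t t' P Q : ℕ} (hs : 0 < s) (hP : P < s) (hQ : Q < s)
    (h1 : t' * s ≤ t * s + P) (h2 : t * s ≤ t' * s + Q) : t = t' := by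
  have ha : t' * s < (t + 1) * s := by nlinarith
  have hb : t * s < (t' + 1) * s := by nlinarith
  have h3 := Nat.lt_of_mul_lt_mul_right ha
  have h4 := Nat.lt_of_mul_lt_mul_right hb
  omega

def SBox (d : ℕ) (lo hi : Fin d → ℝ) : Set (EuclideanSpace ℝ (Fin d)) :=
  {x | ∀ i, x i ∈ Set.Icc (lo i) (hi i)}

lemma sbox_inter_nonempty (d : ℕ) (lo hi lo' hi' : Fin d → ℝ) :
    (SBox d lo hi ∩ SBox d lo' hi').Nonempty ↔
      ∀ i, max (lo i) (lo' i) ≤ min (hi i) (hi' i) := by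
  constructor
  · rintro ⟨x, hx, hx'⟩ i
    have h1 := hx i
    have h2 := hx' i
    simp only [Set.mem_Icc] at h1 h2
    exact le_trans (max_le h1.1 h2.1) (le_min h1.2 h2.2)
  · intro h
    refine ⟨WithLp.toLp 2 (fun i => max (lo i) (lo' i) : Fin d → ℝ), fun i => ?_, fun i => ?_⟩
    · exact Set.mem_Icc.mpr ⟨le_max_left _ _, le_trans (h i) (min_le_left _ _)⟩
    · exact Set.mem_Icc.mpr ⟨le_max_right _ _, le_trans (h i) (min_le_right _ _)⟩




-- (we test in combined file)

def Pat (D k : ℕ) := {c : Fin D → Fin k // ∑ j, (c j : ℕ) = k - 1}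

instance (D k : ℕ) : Fintype (Pat D k) := Subtype.fintype _
instance (D k : ℕ) : DecidableEq (Pat D k) := fun a b =>
  decidable_of_iff (a.1 = b.1) Subtype.ext_iff.symm

def BoxIdx (D k b : ℕ) := (c : Pat D k) × ((j : Fin D) → Fin (b ^ (c.1 j : ℕ)))

instance (D k b : ℕ) : Fintype (BoxIdx D k b) := Sigma.instFintype




variable (d b k : ℕ)

noncomputable def ptLo (t : ℕ) (f : Fin k → ZMod b) : Fin d → ℝ :=
  fun i => if (i : ℕ) < d - 1 then ((t * b ^ k + Pre b k f ((i : ℕ) : ZMod b) k : ℕ) : ℝ) else 0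

noncomputable def ptHi (t H : ℕ) (f : Fin k → ZMod b) : Fin d → ℝ :=
  fun i => if (i : ℕ) < d - 1 then ((t * b ^ k + Pre b k f ((i : ℕ) : ZMod b) k : ℕ) : ℝ)
    else (H : ℝ)

noncomputable def bxLo (t hgt : ℕ) (B : BoxIdx (d-1) k b) : Fin d → ℝ :=
  fun i => if h : (i : ℕ) < d - 1 then
      ((t * b ^ k + (B.2 ⟨i, h⟩ : ℕ) * b ^ (k - (B.1.1 ⟨i, h⟩ : ℕ)) : ℕ) : ℝ) else (hgt : ℝ)

noncomputable def bxHi (t hgt : ℕ) (B : BoxIdx (d-1) k b) : Fin d → ℝ :=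
  fun i => if h : (i : ℕ) < d - 1 then
      ((t * b ^ k + (B.2 ⟨i, h⟩ : ℕ) * b ^ (k - (B.1.1 ⟨i, h⟩ : ℕ))
        + (b ^ (k - (B.1.1 ⟨i, h⟩ : ℕ)) - 1) : ℕ) : ℝ) else (hgt : ℝ)

lemma ptLo_le_ptHi (t H : ℕ) (f : Fin k → ZMod b) (i : Fin d) :
    ptLo d b k t f i ≤ ptHi d b k t H f i := by
  unfold ptLo ptHi
  by_cases h : (i : ℕ) < d - 1
  · simp [h]
  · simp [h]

lemma bxLo_le_bxHi (t hgt : ℕ) (B : BoxIdx (d-1) k b) (i : Fin d) :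
    bxLo d b k t hgt B i ≤ bxHi d b k t hgt B i := by
  unfold bxLo bxHi
  by_cases h : (i : ℕ) < d - 1
  · simp only [dif_pos h]
    exact_mod_cast Nat.le_add_right _ _
  · simp [h]

/-- characterization of point-box intersection -/
lemma pt_bx_iff [NeZero b] (hd : 3 ≤ d) (hb : 1 ≤ b) (hk : 1 ≤ k) (t t' H hgt : ℕ)
    (hgtH : hgt ≤ H) (f : Fin k → ZMod b) (B : BoxIdx (d-1) k b) :
    (SBox d (ptLo d b k t f) (ptHi d b k t H f) ∩
      SBox d (bxLo d b k t' hgt B) (bxHi d b k t' hgt B)).Nonempty ↔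
    (t = t' ∧ ∀ j : Fin (d-1), Pre b k f ((j : ℕ) : ZMod b) (B.1.1 j : ℕ) = (B.2 j : ℕ)) := by
  have hbk : 0 < b ^ k := Nat.pow_pos hb
  have hcle : ∀ j : Fin (d-1), (B.1.1 j : ℕ) ≤ k := fun j => le_of_lt (B.1.1 j).isLt
  have hqlt : ∀ j : Fin (d-1), (B.2 j : ℕ) < b ^ (B.1.1 j : ℕ) := fun j => (B.2 j).isLt
  have hspos : ∀ j : Fin (d-1), 0 < b ^ (k - (B.1.1 j : ℕ)) := fun j => Nat.pow_pos hb
  have hqs : ∀ j : Fin (d-1), (B.2 j : ℕ) * b ^ (k - (B.1.1 j : ℕ))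
      + (b ^ (k - (B.1.1 j : ℕ)) - 1) < b ^ k := by
    intro j
    have h1 : ((B.2 j : ℕ) + 1) * b ^ (k - (B.1.1 j : ℕ))
        ≤ b ^ (B.1.1 j : ℕ) * b ^ (k - (B.1.1 j : ℕ)) :=
      Nat.mul_le_mul_right _ (hqlt j)
    rw [← pow_add] at h1
    have h2 : (B.1.1 j : ℕ) + (k - (B.1.1 j : ℕ)) = k := by have := hcle j; omega
    rw [h2] at h1
    have h3 := hspos j
    have h4 : ((B.2 j : ℕ) + 1) * b ^ (k - (B.1.1 j : ℕ))
        = (B.2 j : ℕ) * b ^ (k - (B.1.1 j : ℕ)) + b ^ (k - (B.1.1 j : ℕ)) := by ring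
    omega
  have hPlt : ∀ (g : Fin k → ZMod b) (a : ZMod b), Pre b k g a k < b ^ k :=
    fun g a => Pre_lt b k hb g a k
  rw [sbox_inter_nonempty]
  constructor
  · intro h
    have key : ∀ j : Fin (d-1),
        t' * b ^ k + (B.2 j : ℕ) * b ^ (k - (B.1.1 j : ℕ))
          ≤ t * b ^ k + Pre b k f ((j : ℕ) : ZMod b) k ∧
        t * b ^ k + Pre b k f ((j : ℕ) : ZMod b) k
          ≤ t' * b ^ k + ((B.2 j : ℕ) * b ^ (k - (B.1.1 j : ℕ))
            + (b ^ (k - (B.1.1 j : ℕ)) - 1)) := by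
      intro j
      have hj : (j : ℕ) < d - 1 := j.isLt
      have hcond := h ⟨(j : ℕ), by omega⟩
      unfold ptLo ptHi bxLo bxHi at hcond
      simp only [dif_pos hj, if_pos hj] at hcond
      simp only [max_le_iff, le_min_iff] at hcond
      obtain ⟨⟨-, h1⟩, h2, -⟩ := hcond
      have hjj : (⟨(j : ℕ), hj⟩ : Fin (d-1)) = j := by ext; rfl
      rw [hjj] at h1 h2
      constructor
      · exact_mod_cast h1
      · have h2' : ((t * b ^ k + Pre b k f ((j : ℕ) : ZMod b) k : ℕ) : ℝ)
            ≤ ((t' * b ^ k + ((B.2 j : ℕ) * b ^ (k - (B.1.1 j : ℕ))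
              + (b ^ (k - (B.1.1 j : ℕ)) - 1)) : ℕ) : ℝ) := by
          push_cast
          push_cast at h2
          linarith
        exact_mod_cast h2'
    have htt : t = t' := by
      obtain ⟨h1, h2⟩ := key ⟨0, by omega⟩
      exact copy_sep hbk (hPlt f _) (hqs ⟨0, by omega⟩)
        (le_trans (Nat.le_add_right _ _) h1)
        (le_trans (Nat.le_add_right (t * b ^ k) _) h2)
    subst htt
    refine ⟨rfl, fun j => ?_⟩
    obtain ⟨h1, h2⟩ := key j
    have h1' : (B.2 j : ℕ) * b ^ (k - (B.1.1 j : ℕ)) ≤ Pre b k f ((j : ℕ) : ZMod b) k := by omega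
    have h2' : Pre b k f ((j : ℕ) : ZMod b) k
        ≤ (B.2 j : ℕ) * b ^ (k - (B.1.1 j : ℕ)) + (b ^ (k - (B.1.1 j : ℕ)) - 1) := by omega
    have hdiv := (div_char _ _ _ (hspos j)).mp ⟨h1', h2'⟩
    rw [Pre_div b k hb f _ _ (hcle j)] at hdiv
    exact hdiv
  · rintro ⟨rfl, hpre⟩ i
    by_cases hi : (i : ℕ) < d - 1
    · unfold ptLo ptHi bxLo bxHi
      simp only [dif_pos hi, if_pos hi]
      set j : Fin (d-1) := ⟨(i : ℕ), hi⟩ with hj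
      have hdiv : Pre b k f ((i : ℕ) : ZMod b) k / b ^ (k - (B.1.1 j : ℕ)) = (B.2 j : ℕ) := by
        rw [Pre_div b k hb f _ _ (hcle j)]
        exact hpre j
      have := (div_char (b ^ (k - (B.1.1 j : ℕ))) (B.2 j : ℕ)
        (Pre b k f ((i : ℕ) : ZMod b) k) (hspos j)).mpr hdiv
      obtain ⟨h1, h2⟩ := this
      simp only [max_le_iff, le_min_iff]
      have e1 : t * b ^ k + (B.2 j : ℕ) * b ^ (k - (B.1.1 j : ℕ))
          ≤ t * b ^ k + Pre b k f ((i : ℕ) : ZMod b) k := by omega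
      have e2 : t * b ^ k + Pre b k f ((i : ℕ) : ZMod b) k
          ≤ t * b ^ k + (B.2 j : ℕ) * b ^ (k - (B.1.1 j : ℕ))
            + (b ^ (k - (B.1.1 j : ℕ)) - 1) := by omega
      have e3 : t * b ^ k + (B.2 j : ℕ) * b ^ (k - (B.1.1 j : ℕ))
          ≤ t * b ^ k + (B.2 j : ℕ) * b ^ (k - (B.1.1 j : ℕ))
            + (b ^ (k - (B.1.1 j : ℕ)) - 1) := Nat.le_add_right _ _
      exact ⟨⟨le_refl _, by exact_mod_cast e1⟩, by exact_mod_cast e2, by exact_mod_cast e3⟩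
    · unfold ptLo ptHi bxLo bxHi
      simp only [dif_neg hi, if_neg hi]
      simp only [max_le_iff, le_min_iff]
      refine ⟨⟨by positivity, by exact_mod_cast hgtH⟩, by positivity, le_rfl⟩

/-- two intersecting points coincide -/
lemma pt_pt_eq [Fact (Nat.Prime b)] (hd : 3 ≤ d) (hD : d - 1 ≤ b) (hk : 1 ≤ k)
    (t t' H : ℕ) (f g : Fin k → ZMod b)
    (h : (SBox d (ptLo d b k t f) (ptHi d b k t H f) ∩
      SBox d (ptLo d b k t' g) (ptHi d b k t' H g)).Nonempty) :
    t = t' ∧ f = g := by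
  have hbprime : Nat.Prime b := Fact.out
  haveI : NeZero b := ⟨hbprime.pos.ne'⟩
  have hb : 1 ≤ b := hbprime.pos
  have hbk : 0 < b ^ k := Nat.pow_pos hb
  rw [sbox_inter_nonempty] at h
  have key : ∀ j : Fin (d-1),
      t' * b ^ k + Pre b k g ((j : ℕ) : ZMod b) k
        ≤ t * b ^ k + Pre b k f ((j : ℕ) : ZMod b) k ∧
      t * b ^ k + Pre b k f ((j : ℕ) : ZMod b) k
        ≤ t' * b ^ k + Pre b k g ((j : ℕ) : ZMod b) k := by
    intro j
    have hj : (j : ℕ) < d - 1 := j.isLt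
    have hcond := h ⟨(j : ℕ), by omega⟩
    unfold ptLo ptHi at hcond
    simp only [dif_pos hj, if_pos hj] at hcond
    simp only [max_le_iff, le_min_iff] at hcond
    obtain ⟨⟨-, h1⟩, h2, -⟩ := hcond
    exact ⟨by exact_mod_cast h1, by exact_mod_cast h2⟩
  have htt : t = t' := by
    obtain ⟨h1, h2⟩ := key ⟨0, by omega⟩
    exact copy_sep hbk (Pre_lt b k hb f _ k) (Pre_lt b k hb g _ k)
      (le_trans (Nat.le_add_right _ _) h1) (le_trans (Nat.le_add_right _ _) h2)
  subst htt
  refine ⟨rfl, ?_⟩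
  -- equality of values at evaluation point 0
  have hPeq : ∀ j : Fin (d-1), Pre b k f ((j : ℕ) : ZMod b) k = Pre b k g ((j : ℕ) : ZMod b) k := by
    intro j
    obtain ⟨h1, h2⟩ := key j
    omega
  -- digits agree at evaluation point 0
  have hw : ∀ r < k, w b k f ((((⟨0, by omega⟩ : Fin (d-1)) : ℕ)) : ZMod b) r
      = w b k g ((((⟨0, by omega⟩ : Fin (d-1)) : ℕ)) : ZMod b) r := by
    have := hPeq ⟨0, by omega⟩
    exact bigendian_unique b hb k _ _ (fun i => w_lt b k f _ i) (fun i => w_lt b k g _ i) this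
  refine key_inj b k hk hD (fun j : Fin (d-1) => if (j : ℕ) = 0 then k else 0) ?_ f g ?_
  · have hmem : (⟨0, by omega⟩ : Fin (d-1)) ∈ (univ : Finset (Fin (d-1))) := mem_univ _
    have := Finset.single_le_sum (f := fun j : Fin (d-1) => if (j : ℕ) = 0 then k else 0)
      (fun j _ => Nat.zero_le _) hmem
    simpa using this
  · intro j r hr
    by_cases hj0 : (j : ℕ) = 0
    · have hjeq : j = ⟨0, by omega⟩ := by ext; exact hj0
      simp only [if_pos hj0] at hr
      rw [hjeq]
      exact hw r hr
    · simp only [if_neg hj0] at hr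
      omega

/-- two intersecting boxes have the same copy and height -/
lemma bx_bx_eq (hd : 3 ≤ d) (hb : 1 ≤ b) (hk : 1 ≤ k) (t t' hgt hgt' : ℕ)
    (B B' : BoxIdx (d-1) k b)
    (h : (SBox d (bxLo d b k t hgt B) (bxHi d b k t hgt B) ∩
      SBox d (bxLo d b k t' hgt' B') (bxHi d b k t' hgt' B')).Nonempty) :
    t = t' ∧ hgt = hgt' := by
  have hbk : 0 < b ^ k := Nat.pow_pos hb
  rw [sbox_inter_nonempty] at h
  have hqs : ∀ (B : BoxIdx (d-1) k b) (j : Fin (d-1)), (B.2 j : ℕ) * b ^ (k - (B.1.1 j : ℕ))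
      + (b ^ (k - (B.1.1 j : ℕ)) - 1) < b ^ k := by
    intro B j
    have h1 : ((B.2 j : ℕ) + 1) * b ^ (k - (B.1.1 j : ℕ))
        ≤ b ^ (B.1.1 j : ℕ) * b ^ (k - (B.1.1 j : ℕ)) :=
      Nat.mul_le_mul_right _ (B.2 j).isLt
    rw [← pow_add] at h1
    have h2 : (B.1.1 j : ℕ) + (k - (B.1.1 j : ℕ)) = k := by
      have := (B.1.1 j).isLt; omega
    rw [h2] at h1
    have h3 : 0 < b ^ (k - (B.1.1 j : ℕ)) := Nat.pow_pos hb
    have h4 : ((B.2 j : ℕ) + 1) * b ^ (k - (B.1.1 j : ℕ))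
        = (B.2 j : ℕ) * b ^ (k - (B.1.1 j : ℕ)) + b ^ (k - (B.1.1 j : ℕ)) := by ring
    omega
  have key : ∀ j : Fin (d-1),
      t' * b ^ k + (B'.2 j : ℕ) * b ^ (k - (B'.1.1 j : ℕ))
        ≤ t * b ^ k + ((B.2 j : ℕ) * b ^ (k - (B.1.1 j : ℕ))
          + (b ^ (k - (B.1.1 j : ℕ)) - 1)) ∧
      t * b ^ k + (B.2 j : ℕ) * b ^ (k - (B.1.1 j : ℕ))
        ≤ t' * b ^ k + ((B'.2 j : ℕ) * b ^ (k - (B'.1.1 j : ℕ))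
          + (b ^ (k - (B'.1.1 j : ℕ)) - 1)) := by
    intro j
    have hj : (j : ℕ) < d - 1 := j.isLt
    have hcond := h ⟨(j : ℕ), by omega⟩
    unfold bxLo bxHi at hcond
    simp only [dif_pos hj] at hcond
    simp only [max_le_iff, le_min_iff] at hcond
    obtain ⟨⟨-, h1⟩, h2, -⟩ := hcond
    have hjj : (⟨(j : ℕ), hj⟩ : Fin (d-1)) = j := by ext; rfl
    rw [hjj] at h1 h2
    constructor
    · have : ((t' * b ^ k + (B'.2 j : ℕ) * b ^ (k - (B'.1.1 j : ℕ)) : ℕ) : ℝ)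
          ≤ ((t * b ^ k + ((B.2 j : ℕ) * b ^ (k - (B.1.1 j : ℕ))
            + (b ^ (k - (B.1.1 j : ℕ)) - 1)) : ℕ) : ℝ) := by
        push_cast at h1 ⊢
        linarith
      exact_mod_cast this
    · have : ((t * b ^ k + (B.2 j : ℕ) * b ^ (k - (B.1.1 j : ℕ)) : ℕ) : ℝ)
          ≤ ((t' * b ^ k + ((B'.2 j : ℕ) * b ^ (k - (B'.1.1 j : ℕ))
            + (b ^ (k - (B'.1.1 j : ℕ)) - 1)) : ℕ) : ℝ) := by
        push_cast at h2 ⊢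
        linarith
      exact_mod_cast this
  constructor
  · obtain ⟨h1, h2⟩ := key ⟨0, by omega⟩
    exact copy_sep hbk (hqs B _) (hqs B' _)
      (le_trans (Nat.le_add_right _ _) h1)
      (le_trans (Nat.le_add_right _ _) h2)
  · have hj : ¬ (((⟨d - 1, by omega⟩ : Fin d) : ℕ) < d - 1) := by
      simp
    have hcond := h ⟨d - 1, by omega⟩
    unfold bxLo bxHi at hcond
    simp only [dif_neg hj] at hcond
    simp only [max_le_iff, le_min_iff] at hcond
    obtain ⟨⟨-, h1⟩, h2, -⟩ := hcond
    have := le_antisymm h2 h1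
    exact_mod_cast this




lemma Pre_unique {b k : ℕ} [NeZero b] (hb : 1 ≤ b) (f g : Fin k → ZMod b) (a : ZMod b) (c : ℕ)
    (h : Pre b k f a c = Pre b k g a c) : ∀ r < c, w b k f a r = w b k g a r :=
  bigendian_unique b hb c _ _ (fun i => w_lt b k f a i) (fun i => w_lt b k g a i) h

/-- the core K22-freeness fact: two points lying in two distinct boxes coincide -/
lemma k22_core {b k D : ℕ} [Fact (Nat.Prime b)] (hD : D ≤ b) (hk : 1 ≤ k)
    (f g : Fin k → ZMod b) (Bq Bq' : BoxIdx D k b) (hne : Bq ≠ Bq')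
    (hf : ∀ j : Fin D, Pre b k f ((j : ℕ) : ZMod b) (Bq.1.1 j : ℕ) = (Bq.2 j : ℕ))
    (hf' : ∀ j : Fin D, Pre b k f ((j : ℕ) : ZMod b) (Bq'.1.1 j : ℕ) = (Bq'.2 j : ℕ))
    (hg : ∀ j : Fin D, Pre b k g ((j : ℕ) : ZMod b) (Bq.1.1 j : ℕ) = (Bq.2 j : ℕ))
    (hg' : ∀ j : Fin D, Pre b k g ((j : ℕ) : ZMod b) (Bq'.1.1 j : ℕ) = (Bq'.2 j : ℕ)) :
    f = g := by
  have hbprime : Nat.Prime b := Fact.out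
  haveI : NeZero b := ⟨hbprime.pos.ne'⟩
  have hb : 1 ≤ b := hbprime.pos
  obtain ⟨c, q⟩ := Bq
  obtain ⟨c', q'⟩ := Bq'
  by_cases hcc : c = c'
  · -- same pattern: boxes must be equal, contradiction
    subst hcc
    exfalso
    apply hne
    have : q = q' := by
      funext j
      refine Fin.ext ?_
      rw [← hf j, ← hf' j]
    rw [this]
  · -- different patterns
    set m : Fin D → ℕ := fun j => max (c.1 j : ℕ) (c'.1 j : ℕ) with hm
    have hsum : k ≤ ∑ j, m j := by
      have h1 : ∀ j, m j = (c'.1 j : ℕ) + ((c.1 j : ℕ) - (c'.1 j : ℕ)) := by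
        intro j; simp only [hm]; omega
      have h2 : ∑ j, m j = (k - 1) + ∑ j, ((c.1 j : ℕ) - (c'.1 j : ℕ)) := by
        rw [Finset.sum_congr rfl (fun j _ => h1 j), Finset.sum_add_distrib, c'.2]
      have h3 : ∑ j, ((c.1 j : ℕ) - (c'.1 j : ℕ)) ≠ 0 := by
        intro h0
        apply hcc
        have hle : ∀ j, (c.1 j : ℕ) ≤ (c'.1 j : ℕ) := by
          intro j
          have := Finset.sum_eq_zero_iff.mp h0 j (Finset.mem_univ j)
          omega
        have : ∀ j ∈ Finset.univ, (c.1 j : ℕ) = (c'.1 j : ℕ) := by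
          by_contra hcon
          push_neg at hcon
          obtain ⟨j0, -, hj0⟩ := hcon
          have hlt : (c.1 j0 : ℕ) < (c'.1 j0 : ℕ) := lt_of_le_of_ne (hle j0) hj0
          have := Finset.sum_lt_sum (fun j _ => hle j) ⟨j0, Finset.mem_univ _, hlt⟩
          rw [c.2, c'.2] at this
          omega
        refine Subtype.ext (funext fun j => Fin.ext (this j (Finset.mem_univ j)))
      omega
    refine key_inj b k hk hD m hsum f g ?_
    intro j r hr
    have hr' : r < (c.1 j : ℕ) ∨ r < (c'.1 j : ℕ) := by
      simp only [hm] at hr; omega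
    rcases hr' with hr1 | hr2
    · exact Pre_unique hb f g _ _ ((hf j).trans (hg j).symm) r hr1
    · exact Pre_unique hb f g _ _ ((hf' j).trans (hg' j).symm) r hr2

lemma card_BoxIdx (D k b : ℕ) (hk : 1 ≤ k) :
    Fintype.card (BoxIdx D k b) = Fintype.card (Pat D k) * b ^ (k - 1) := by
  rw [show Fintype.card (BoxIdx D k b) = ∑ c : Pat D k, Fintype.card ((j : Fin D) → Fin (b ^ (c.1 j : ℕ))) from Fintype.card_sigma]
  have : ∀ c : Pat D k, Fintype.card ((j : Fin D) → Fin (b ^ (c.1 j : ℕ))) = b ^ (k-1) := by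
    intro c
    rw [Fintype.card_pi]
    simp only [Fintype.card_fin]
    rw [Finset.prod_pow_eq_pow_sum, c.2]
  rw [Finset.sum_congr rfl (fun c _ => this c), Finset.sum_const, Finset.card_univ, smul_eq_mul]

/-- extended pattern function -/
def cext {D k : ℕ} (c : Pat D k) (m : ℕ) : ℕ := if h : m < D then (c.1 ⟨m, h⟩ : ℕ) else 0

lemma cext_sum {D k : ℕ} (c : Pat D k) : ∑ i ∈ Finset.range D, cext c i = k - 1 := by
  rw [← Fin.sum_univ_eq_sum_range]
  rw [← c.2]
  refine Finset.sum_congr rfl (fun j _ => ?_)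
  unfold cext
  rw [dif_pos j.isLt]

lemma cext_partial_le {D k : ℕ} (c : Pat D k) (mm : ℕ) (hmm : mm ≤ D) :
    ∑ i ∈ Finset.range mm, cext c i ≤ k - 1 := by
  rw [← cext_sum c]
  exact Finset.sum_le_sum_of_subset (Finset.range_subset_range.mpr hmm)

lemma T_le (D' k : ℕ) (hk : 1 ≤ k) : Fintype.card (Pat (D'+1) k) ≤ k ^ D' := by
  have hinj : Function.Injective (fun c : Pat (D'+1) k =>
      (fun j : Fin D' => (⟨∑ i ∈ Finset.range ((j : ℕ)+1), cext c i,
        lt_of_le_of_lt (cext_partial_le c _ (by omega)) (by omega)⟩ : Fin k))) := by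
    intro c c' h
    have hpart : ∀ mm, mm ≤ D'+1 → ∑ i ∈ Finset.range mm, cext c i = ∑ i ∈ Finset.range mm, cext c' i := by
      intro mm hmm
      rcases mm with - | M
      · simp
      · by_cases hM : M < D'
        · have := congrFun h ⟨M, hM⟩
          simpa using congrArg Fin.val this
        · have hMD : M = D' := by omega
          subst hMD
          rw [cext_sum c, cext_sum c']
    have hcext : ∀ mm < D'+1, cext c mm = cext c' mm := by
      intro mm hmm
      have h1 := hpart mm (by omega)
      have h2 := hpart (mm+1) (by omega)
      rw [Finset.sum_range_succ, Finset.sum_range_succ] at h2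
      omega
    refine Subtype.ext (funext fun j => Fin.ext ?_)
    have := hcext (j : ℕ) j.isLt
    unfold cext at this
    rwa [dif_pos j.isLt, dif_pos j.isLt] at this
  calc Fintype.card (Pat (D'+1) k) ≤ Fintype.card (Fin D' → Fin k) :=
        Fintype.card_le_of_injective _ hinj
    _ = k ^ D' := by simp [Fintype.card_pi]

lemma T_ge (D' k : ℕ) (hk : 2 ≤ k) (q : ℕ) (hq : (D' * q) ≤ k - 1) (hqk : q < k) :
    (q+1) ^ D' ≤ Fintype.card (Pat (D'+1) k) := by
  have hinj : Function.Injective (fun x : Fin D' → Fin (q+1) =>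
      (⟨Fin.snoc (fun j => (⟨(x j : ℕ), by omega⟩ : Fin k))
        (⟨k - 1 - ∑ j, (x j : ℕ), by omega⟩ : Fin k), by
          rw [Fin.sum_univ_castSucc]
          simp only [Fin.snoc_castSucc, Fin.snoc_last]
          have hV : ∑ j, ((x j : ℕ)) ≤ D' * q := by
            calc ∑ j : Fin D', ((x j : ℕ)) ≤ ∑ _j : Fin D', q :=
                  Finset.sum_le_sum (fun j _ => by have := (x j).isLt; omega)
            _ = D' * q := by simp [Finset.sum_const, mul_comm]
          omega⟩ : Pat (D'+1) k)) := by
    intro x x' h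
    have h1 := congrArg (fun c : Pat (D'+1) k => c.1) h
    funext j
    have := congrFun h1 (Fin.castSucc j)
    simp only [Fin.snoc_castSucc] at this
    exact Fin.ext (by simpa using congrArg Fin.val this)
  calc (q+1) ^ D' = Fintype.card (Fin D' → Fin (q+1)) := by simp [Fintype.card_pi]
    _ ≤ Fintype.card (Pat (D'+1) k) := Fintype.card_le_of_injective _ hinj




open SimpleGraph

theorem main_construction {d : ℕ} (hd : 3 ≤ d) (b k : ℕ) [Fact (Nat.Prime b)] (hk : 1 ≤ k)
    (hD : d - 1 ≤ b) (n : ℕ)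
    (hsn : b ^ k + Fintype.card (BoxIdx (d-1) k b) ≤ n) :
    ∃ O : Fin n → Set (EuclideanSpace ℝ (Fin d)),
      (∀ i, IsBox (O i)) ∧
      (∃ A : Set (Fin n),
        (∀ i ∈ A, ∀ j ∈ A, ¬ (intersectionGraph O).Adj i j) ∧
        (∀ i ∉ A, ∀ j ∉ A, ¬ (intersectionGraph O).Adj i j)) ∧
      (¬ ∃ a b' x y : Fin n, a ≠ b' ∧ a ≠ x ∧ a ≠ y ∧ b' ≠ x ∧ b' ≠ y ∧ x ≠ y ∧
        (intersectionGraph O).Adj a x ∧ (intersectionGraph O).Adj a y ∧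
        (intersectionGraph O).Adj b' x ∧ (intersectionGraph O).Adj b' y) ∧
      (n / (b ^ k + Fintype.card (BoxIdx (d-1) k b))) * (b ^ k * Fintype.card (Pat (d-1) k))
        ≤ (intersectionGraph O).edgeSet.ncard := by
  have hbprime : Nat.Prime b := Fact.out
  haveI : NeZero b := ⟨hbprime.pos.ne'⟩
  have hb : 1 ≤ b := hbprime.pos
  set s := b ^ k + Fintype.card (BoxIdx (d-1) k b) with hs
  set r := n / s with hr
  set H := Fintype.card (BoxIdx (d-1) k b) with hH
  -- index type
  set ι := Fin r × ((Fin k → ZMod b) ⊕ BoxIdx (d-1) k b) with hι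
  have hcard : Fintype.card ι = r * s := by
    show Fintype.card (Fin r × ((Fin k → ZMod b) ⊕ BoxIdx (d-1) k b)) = r * s
    rw [Fintype.card_prod, Fintype.card_sum, Fintype.card_fin, Fintype.card_fun,
      ZMod.card, Fintype.card_fin]
  have hcardle : Fintype.card ι ≤ n := by
    rw [hcard, hr]
    exact Nat.div_mul_le_self n s
  obtain ⟨e⟩ : Nonempty (ι ↪ Fin n) := by
    apply Function.Embedding.nonempty_of_card_le
    simpa using hcardle
  -- height of a box
  set hgt : BoxIdx (d-1) k b → ℕ := fun B => ((Fintype.equivFin (BoxIdx (d-1) k b)) B : ℕ)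
    with hhgt
  have hgt_le : ∀ B, hgt B ≤ H := fun B => le_of_lt ((Fintype.equivFin _) B).isLt
  have hgt_inj : Function.Injective hgt := by
    intro B B' hBB
    exact (Fintype.equivFin _).injective (Fin.ext hBB)
  -- lower/upper corner of each construction element
  set lo : ι → (Fin d → ℝ) := fun p => Sum.elim (fun f => ptLo d b k (p.1 : ℕ) f)
    (fun B => bxLo d b k (p.1 : ℕ) (hgt B) B) p.2 with hlo
  set hi : ι → (Fin d → ℝ) := fun p => Sum.elim (fun f => ptHi d b k (p.1 : ℕ) H f)
    (fun B => bxHi d b k (p.1 : ℕ) (hgt B) B) p.2 with hhi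
  -- the family
  classical
  set O : Fin n → Set (EuclideanSpace ℝ (Fin d)) := fun i =>
    if h : ∃ p, e p = i then SBox d (lo h.choose) (hi h.choose)
    else SBox d (fun x => if (x : ℕ) = 0 then -(1 + (i : ℕ)) else 0)
      (fun x => if (x : ℕ) = 0 then -(1 + (i : ℕ)) else 0) with hO
  have hOr : ∀ p : ι, O (e p) = SBox d (lo p) (hi p) := by
    intro p
    have hex : ∃ p', e p' = e p := ⟨p, rfl⟩
    have : hex.choose = p := e.injective hex.choose_spec
    rw [hO]
    simp only [dif_pos hex, this]
  have hOpad : ∀ i, (¬ ∃ p, e p = i) →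
      O i = SBox d (fun x => if (x : ℕ) = 0 then -(1 + (i : ℕ)) else 0)
        (fun x => if (x : ℕ) = 0 then -(1 + (i : ℕ)) else 0) := by
    intro i h
    rw [hO]
    simp only [dif_neg h]
  -- nonnegativity of construction boxes at every coordinate
  have hlo0 : ∀ p : ι, ∀ x : Fin d, 0 ≤ lo p x := by
    rintro ⟨t, f | B⟩ x
    · rw [hlo]
      simp only [Sum.elim_inl]
      unfold ptLo
      by_cases hx : (x : ℕ) < d - 1
      · rw [if_pos hx]; positivity
      · rw [if_neg hx]
    · rw [hlo]
      simp only [Sum.elim_inr]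
      unfold bxLo
      by_cases hx : (x : ℕ) < d - 1
      · rw [dif_pos hx]; positivity
      · rw [dif_neg hx]; positivity
  -- adjacency characterizations
  have hadj : ∀ i j, (intersectionGraph O).Adj i j ↔ i ≠ j ∧ (O i ∩ O j).Nonempty := by
    intro i j
    rw [intersectionGraph, fromRel_adj]
    constructor
    · rintro ⟨hij, h | h⟩
      · exact ⟨hij, h⟩
      · exact ⟨hij, by rwa [Set.inter_comm]⟩
    · rintro ⟨hij, h⟩
      exact ⟨hij, Or.inl h⟩
  have noPad : ∀ i j, (¬ ∃ p, e p = i) → ¬ (intersectionGraph O).Adj i j := by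
    intro i j hi' hadjij
    obtain ⟨hij, hne⟩ := (hadj i j).mp hadjij
    rw [hOpad i hi'] at hne
    by_cases hj : ∃ p, e p = j
    · obtain ⟨p, rfl⟩ := hj
      rw [hOr p] at hne
      rw [sbox_inter_nonempty] at hne
      have h0 := hne ⟨0, by omega⟩
      have hlo00 := hlo0 p ⟨0, by omega⟩
      rw [if_pos (show ((⟨0, by omega⟩ : Fin d) : ℕ) = 0 from rfl)] at h0
      have h1 : lo p ⟨0, by omega⟩ ≤ -(1 + (i : ℕ)) :=
        le_trans (le_max_right _ _) (le_trans h0 (min_le_left _ _))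
      have h2 : (0:ℝ) ≤ ((i : ℕ) : ℝ) := Nat.cast_nonneg _
      linarith
    · rw [hOpad j hj] at hne
      rw [sbox_inter_nonempty] at hne
      have h0 := hne ⟨0, by omega⟩
      rw [if_pos (show ((⟨0, by omega⟩ : Fin d) : ℕ) = 0 from rfl),
        if_pos (show ((⟨0, by omega⟩ : Fin d) : ℕ) = 0 from rfl)] at h0
      have h1 : (-(1 + ((j : Fin n) : ℕ)) : ℝ) ≤ -(1 + (i : ℕ)) :=
        le_trans (le_max_right _ _) (le_trans h0 (min_le_left _ _))
      have h2 : (-(1 + ((i : Fin n) : ℕ)) : ℝ) ≤ -(1 + ((j : Fin n) : ℕ)) :=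
        le_trans (le_max_left _ _) (le_trans h0 (min_le_right _ _))
      have h3 : (((j : Fin n) : ℕ) : ℝ) = (((i : Fin n) : ℕ) : ℝ) := by linarith
      exact hij (Fin.ext (by exact_mod_cast h3.symm))
  have ptpt : ∀ (t t' : Fin r) f g, (intersectionGraph O).Adj (e (t, Sum.inl f)) (e (t', Sum.inl g))
      → False := by
    intro t t' f g hadjij
    obtain ⟨hij, hne⟩ := (hadj _ _).mp hadjij
    rw [hOr, hOr] at hne
    simp only [hlo, hhi, Sum.elim_inl] at hne
    obtain ⟨htt, hfg⟩ := pt_pt_eq d b k hd hD hk _ _ H f g hne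
    apply hij
    congr 1
    exact Prod.ext (Fin.ext htt) (by rw [hfg])
  have bxbx : ∀ (t t' : Fin r) B B', (intersectionGraph O).Adj (e (t, Sum.inr B)) (e (t', Sum.inr B'))
      → False := by
    intro t t' B B' hadjij
    obtain ⟨hij, hne⟩ := (hadj _ _).mp hadjij
    rw [hOr, hOr] at hne
    simp only [hlo, hhi, Sum.elim_inr] at hne
    obtain ⟨htt, hh⟩ := bx_bx_eq d b k hd hb hk _ _ _ _ B B' hne
    apply hij
    congr 1
    exact Prod.ext (Fin.ext htt) (by rw [hgt_inj hh])
  have ptbx : ∀ (t t' : Fin r) f B, (intersectionGraph O).Adj (e (t, Sum.inl f)) (e (t', Sum.inr B))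
      ↔ ((t : ℕ) = (t' : ℕ) ∧ ∀ j : Fin (d-1),
          Pre b k f ((j : ℕ) : ZMod b) (B.1.1 j : ℕ) = (B.2 j : ℕ)) := by
    intro t t' f B
    rw [hadj, hOr, hOr]
    simp only [hlo, hhi, Sum.elim_inl, Sum.elim_inr]
    rw [pt_bx_iff d b k hd hb hk _ _ H _ (hgt_le B) f B]
    constructor
    · rintro ⟨-, h⟩; exact h
    · rintro ⟨h1, h2⟩
      refine ⟨?_, h1, h2⟩
      intro hcon
      have := e.injective hcon
      exact (Sum.inl_ne_inr (congrArg Prod.snd this)).elim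
  refine ⟨O, ?_, ?_, ?_, ?_⟩
  · -- boxes
    intro i
    by_cases h : ∃ p, e p = i
    · obtain ⟨p, rfl⟩ := h
      rw [hOr p]
      refine ⟨lo p, hi p, ?_, rfl⟩
      rcases p with ⟨t, f | B⟩
      · exact fun x => ptLo_le_ptHi d b k _ H f x
      · exact fun x => bxLo_le_bxHi d b k _ _ B x
    · rw [hOpad i h]
      exact ⟨_, _, fun x => le_refl _, rfl⟩
  · -- bipartite
    refine ⟨{i | ∀ p : ι, e p = i → ∃ t f, p = (t, Sum.inl f)}, ?_, ?_⟩
    · intro i hiA j hjA hadjij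
      by_cases hi' : ∃ p, e p = i
      · obtain ⟨p, rfl⟩ := hi'
        obtain ⟨t, f, rfl⟩ := hiA p rfl
        by_cases hj' : ∃ p', e p' = j
        · obtain ⟨p', rfl⟩ := hj'
          obtain ⟨t', g, rfl⟩ := hjA p' rfl
          exact ptpt t t' f g hadjij
        · exact noPad j _ hj' hadjij.symm
      · exact noPad i j hi' hadjij
    · intro i hiA j hjA hadjij
      simp only [Set.mem_setOf_eq, not_forall] at hiA hjA
      obtain ⟨p, hpi, hpl⟩ := hiA
      obtain ⟨p', hpj, hpl'⟩ := hjA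
      obtain ⟨t, z⟩ := p
      obtain ⟨t', z'⟩ := p'
      rcases z with f | B
      · exact hpl ⟨t, f, rfl⟩
      rcases z' with g | B'
      · exact hpl' ⟨t', g, rfl⟩
      subst hpi hpj
      exact bxbx t t' B B' hadjij
  · -- K22-free
    rintro ⟨a, b', x, y, hab, hax, hay, hbx, hby, hxy, hAax, hAay, hAbx, hAby⟩
    -- all four vertices are construction elements
    have hea : ∃ p, e p = a := by
      by_contra h; exact noPad a x h hAax
    have heb : ∃ p, e p = b' := by
      by_contra h; exact noPad b' x h hAbx
    have hex : ∃ p, e p = x := by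
      by_contra h; exact noPad x a h hAax.symm
    have hey : ∃ p, e p = y := by
      by_contra h; exact noPad y a h hAay.symm
    obtain ⟨⟨ta, za⟩, rfl⟩ := hea
    obtain ⟨⟨tb, zb⟩, rfl⟩ := heb
    obtain ⟨⟨tx, zx⟩, rfl⟩ := hex
    obtain ⟨⟨ty, zy⟩, rfl⟩ := hey
    -- a and x have different kinds
    rcases za with fa | Ba
    · -- a is a point, so x and y are boxes, and b' is a point
      rcases zx with fx | Bx
      · exact ptpt _ _ _ _ hAax
      rcases zy with fy | By
      · exact ptpt _ _ _ _ hAay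
      rcases zb with fb | Bb
      swap
      · exact bxbx _ _ _ _ hAbx
      obtain ⟨htax, hax'⟩ := (ptbx _ _ _ _).mp hAax
      obtain ⟨htay, hay'⟩ := (ptbx _ _ _ _).mp hAay
      obtain ⟨htbx, hbx'⟩ := (ptbx _ _ _ _).mp hAbx
      obtain ⟨htby, hby'⟩ := (ptbx _ _ _ _).mp hAby
      have hBxy : Bx ≠ By := by
        intro hcon
        apply hxy
        have : (tx, (Sum.inr Bx : (Fin k → ZMod b) ⊕ BoxIdx (d-1) k b))
            = (ty, Sum.inr By) := by
          rw [Prod.mk.injEq]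
          exact ⟨Fin.ext (by omega), by rw [hcon]⟩
        rw [this]
      have := k22_core hD hk fa fb Bx By hBxy hax' hay' hbx' hby'
      apply hab
      have h5 : (ta, (Sum.inl fa : (Fin k → ZMod b) ⊕ BoxIdx (d-1) k b))
          = (tb, Sum.inl fb) := by
        rw [Prod.mk.injEq]
        exact ⟨Fin.ext (by omega), by rw [this]⟩
      rw [h5]
    · -- a is a box, so x and y are points, and b' is a box
      rcases zx with fx | Bx
      swap
      · exact bxbx _ _ _ _ hAax
      rcases zy with fy | By
      swap
      · exact bxbx _ _ _ _ hAay
      rcases zb with fb | Bb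
      · exact ptpt _ _ _ _ hAby.symm
      obtain ⟨htax, hax'⟩ := (ptbx _ _ _ _).mp hAax.symm
      obtain ⟨htay, hay'⟩ := (ptbx _ _ _ _).mp hAay.symm
      obtain ⟨htbx, hbx'⟩ := (ptbx _ _ _ _).mp hAbx.symm
      obtain ⟨htby, hby'⟩ := (ptbx _ _ _ _).mp hAby.symm
      have hBab : Ba ≠ Bb := by
        intro hcon
        apply hab
        have : (ta, (Sum.inr Ba : (Fin k → ZMod b) ⊕ BoxIdx (d-1) k b))
            = (tb, Sum.inr Bb) := by
          rw [Prod.mk.injEq]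
          exact ⟨Fin.ext (by omega), by rw [hcon]⟩
        rw [this]
      have := k22_core hD hk fx fy Ba Bb hBab hax' hbx' hay' hby'
      apply hxy
      have h5 : (tx, (Sum.inl fx : (Fin k → ZMod b) ⊕ BoxIdx (d-1) k b))
          = (ty, Sum.inl fy) := by
        rw [Prod.mk.injEq]
        exact ⟨Fin.ext (by omega), by rw [this]⟩
      rw [h5]
  · -- edge count
    set Φ : Fin r × (Fin k → ZMod b) × Pat (d-1) k → Sym2 (Fin n) := fun p =>
      s(e (p.1, Sum.inl p.2.1), e (p.1, Sum.inr ⟨p.2.2, fun j =>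
        ⟨Pre b k p.2.1 ((j : ℕ) : ZMod b) (p.2.2.1 j : ℕ), Pre_lt b k hb _ _ _⟩⟩)) with hΦ
    have hΦmem : ∀ p, Φ p ∈ (intersectionGraph O).edgeSet := by
      rintro ⟨t, f, c⟩
      rw [SimpleGraph.mem_edgeSet]
      exact (ptbx t t f _).mpr ⟨rfl, fun j => rfl⟩
    have hΦinj : Function.Injective Φ := by
      rintro ⟨t, f, c⟩ ⟨t', f', c'⟩ h
      simp only [hΦ, Sym2.eq_iff] at h
      rcases h with ⟨h1, h2⟩ | ⟨h1, h2⟩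
      · have h1' := e.injective h1
        have h2' := e.injective h2
        have ht : t = t' := congrArg Prod.fst h1'
        have hf : f = f' := by
          have := congrArg Prod.snd h1'
          simpa using this
        have hc : c = c' := by
          have h3 := congrArg Prod.snd h2'
          simp only at h3
          have h4 := Sum.inr.inj h3
          exact congrArg Sigma.fst h4
        subst ht; subst hf; subst hc; rfl
      · have := e.injective h1
        exact ((Sum.inl_ne_inr (congrArg Prod.snd this)).elim : (t,f,c) = (t',f',c'))
    have hfin : (intersectionGraph O).edgeSet.Finite := Set.toFinite _
    have hsub : Set.range Φ ⊆ (intersectionGraph O).edgeSet := by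
      rintro - ⟨p, rfl⟩
      exact hΦmem p
    have hcard2 : (Set.range Φ).ncard = r * (b ^ k * Fintype.card (Pat (d-1) k)) := by
      rw [← Set.image_univ, Set.ncard_image_of_injective _ hΦinj, Set.ncard_univ,
        Nat.card_eq_fintype_card, Fintype.card_prod, Fintype.card_prod, Fintype.card_fin]
      congr 2
      rw [Fintype.card_fun, ZMod.card, Fintype.card_fin]
    calc r * (b ^ k * Fintype.card (Pat (d-1) k)) = (Set.range Φ).ncard := hcard2.symm
      _ ≤ (intersectionGraph O).edgeSet.ncard := Set.ncard_le_ncard hsub hfin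



/-- the easy construction for small n : one edge -/
lemma small_case {d n : ℕ} (hd : 3 ≤ d) (hn : 3 ≤ n) :
    ∃ O : Fin n → Set (EuclideanSpace ℝ (Fin d)),
      (∀ i, IsBox (O i)) ∧
      (∃ A : Set (Fin n),
        (∀ i ∈ A, ∀ j ∈ A, ¬ (intersectionGraph O).Adj i j) ∧
        (∀ i ∉ A, ∀ j ∉ A, ¬ (intersectionGraph O).Adj i j)) ∧
      (¬ ∃ a b' x y : Fin n, a ≠ b' ∧ a ≠ x ∧ a ≠ y ∧ b' ≠ x ∧ b' ≠ y ∧ x ≠ y ∧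
        (intersectionGraph O).Adj a x ∧ (intersectionGraph O).Adj a y ∧
        (intersectionGraph O).Adj b' x ∧ (intersectionGraph O).Adj b' y) ∧
      1 ≤ (intersectionGraph O).edgeSet.ncard := by
  classical
  set pos : Fin n → ℝ := fun i => if (i : ℕ) ≤ 1 then 0 else ((i : ℕ) : ℝ) with hpos
  set O : Fin n → Set (EuclideanSpace ℝ (Fin d)) := fun i =>
    SBox d (fun x => if (x : ℕ) = 0 then pos i else 0)
      (fun x => if (x : ℕ) = 0 then pos i else 0) with hOdef
  have hinter : ∀ i j, (O i ∩ O j).Nonempty ↔ pos i = pos j := by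
    intro i j
    rw [hOdef]
    rw [sbox_inter_nonempty]
    constructor
    · intro h
      have h0 := h ⟨0, by omega⟩
      rw [if_pos (show ((⟨0, by omega⟩ : Fin d) : ℕ) = 0 from rfl),
        if_pos (show ((⟨0, by omega⟩ : Fin d) : ℕ) = 0 from rfl)] at h0
      have h1 : pos j ≤ pos i := le_trans (le_max_right _ _) (le_trans h0 (min_le_left _ _))
      have h2 : pos i ≤ pos j := le_trans (le_max_left _ _) (le_trans h0 (min_le_right _ _))
      exact le_antisymm h2 h1
    · intro h x
      by_cases hx : (x : ℕ) = 0
      · rw [if_pos hx, if_pos hx, h]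
        simp
      · rw [if_neg hx, if_neg hx]
        simp
  have hAdj : ∀ i j, (intersectionGraph O).Adj i j ↔ i ≠ j ∧ pos i = pos j := by
    intro i j
    rw [intersectionGraph, SimpleGraph.fromRel_adj]
    rw [hinter, hinter]
    constructor
    · rintro ⟨h1, h2 | h2⟩
      · exact ⟨h1, h2⟩
      · exact ⟨h1, h2.symm⟩
    · rintro ⟨h1, h2⟩
      exact ⟨h1, Or.inl h2⟩
  have hsmall : ∀ i j, (intersectionGraph O).Adj i j → (i : ℕ) ≤ 1 ∧ (j : ℕ) ≤ 1 := by
    intro i j hadj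
    obtain ⟨hij, hpp⟩ := (hAdj i j).mp hadj
    by_contra hcon
    push_neg at hcon
    rw [hpos] at hpp
    simp only at hpp
    by_cases hi1 : (i : ℕ) ≤ 1
    · have hj1 : ¬ ((j : ℕ) ≤ 1) := by
        intro hj1
        exact absurd (hcon hi1) (by omega)
      rw [if_pos hi1, if_neg hj1] at hpp
      have : ((j : ℕ) : ℝ) ≤ 1 := by rw [← hpp]; norm_num
      have : (j : ℕ) ≤ 1 := by exact_mod_cast this
      omega
    · by_cases hj1 : (j : ℕ) ≤ 1
      · rw [if_neg hi1, if_pos hj1] at hpp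
        have : ((i : ℕ) : ℝ) ≤ 1 := by rw [hpp]; norm_num
        have : (i : ℕ) ≤ 1 := by exact_mod_cast this
        omega
      · rw [if_neg hi1, if_neg hj1] at hpp
        have : (i : ℕ) = (j : ℕ) := by exact_mod_cast hpp
        exact hij (Fin.ext this)
  refine ⟨O, ?_, ?_, ?_, ?_⟩
  · intro i
    exact ⟨_, _, fun x => le_refl _, rfl⟩
  · refine ⟨{i | i ≠ ⟨1, by omega⟩}, ?_, ?_⟩
    · intro i hiA j hjA hadj
      obtain ⟨h1, h2⟩ := hsmall i j hadj
      obtain ⟨hij, -⟩ := (hAdj i j).mp hadj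
      have hi0 : (i : ℕ) = 0 := by
        rcases Nat.lt_or_ge (i : ℕ) 1 with h | h
        · omega
        · exfalso; exact hiA (Fin.ext (show (i : ℕ) = 1 by omega))
      have hj0 : (j : ℕ) = 0 := by
        rcases Nat.lt_or_ge (j : ℕ) 1 with h | h
        · omega
        · exfalso; exact hjA (Fin.ext (show (j : ℕ) = 1 by omega))
      exact hij (Fin.ext (by omega))
    · intro i hiA j hjA hadj
      simp only [Set.mem_setOf_eq, not_not] at hiA hjA
      subst hiA
      subst hjA
      exact ((hAdj _ _).mp hadj).1 rfl
  · rintro ⟨a, b', x, y, hab, hax, hay, hbx, hby, hxy, h1, h2, h3, h4⟩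
    obtain ⟨ha1, hx1⟩ := hsmall _ _ h1
    obtain ⟨-, hy1⟩ := hsmall _ _ h2
    have hvax : (a : ℕ) ≠ (x : ℕ) := fun hc => hax (Fin.ext hc)
    have hvay : (a : ℕ) ≠ (y : ℕ) := fun hc => hay (Fin.ext hc)
    have hvxy : (x : ℕ) ≠ (y : ℕ) := fun hc => hxy (Fin.ext hc)
    omega
  · have hedge : s((⟨0, by omega⟩ : Fin n), (⟨1, by omega⟩ : Fin n))
        ∈ (intersectionGraph O).edgeSet := by
      rw [SimpleGraph.mem_edgeSet, hAdj]
      constructor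
      · intro hcon
        have := congrArg Fin.val hcon
        simp at this
      · rw [hpos]
        norm_num
    have hfin : (intersectionGraph O).edgeSet.Finite := Set.toFinite _
    have := (Set.ncard_pos hfin).mpr ⟨_, hedge⟩
    omega




noncomputable def bp (d k : ℕ) : ℕ :=
  (Nat.exists_prime_lt_and_le_two_mul ((k*(d-1)+1)^(d-2))
    (Nat.pow_pos (Nat.succ_pos _)).ne').choose

lemma bp_spec (d k : ℕ) : (bp d k).Prime ∧ (k*(d-1)+1)^(d-2) < bp d k ∧
    bp d k ≤ 2 * (k*(d-1)+1)^(d-2) :=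
  (Nat.exists_prime_lt_and_le_two_mul ((k*(d-1)+1)^(d-2))
    (Nat.pow_pos (Nat.succ_pos _)).ne').choose_spec

noncomputable def sz (d k : ℕ) : ℕ :=
  bp d k ^ k + Fintype.card (BoxIdx (d-1) k (bp d k))

lemma T_le' (d k : ℕ) (hd : 3 ≤ d) (hk : 1 ≤ k) :
    Fintype.card (Pat (d-1) k) ≤ k ^ (d-2) := by
  have hd21 : d - 2 + 1 = d - 1 := by omega
  rw [← hd21]
  exact T_le (d-2) k hk

lemma T_le_bp (d k : ℕ) (hd : 3 ≤ d) (hk : 1 ≤ k) :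
    Fintype.card (Pat (d-1) k) ≤ bp d k := by
  refine le_trans (T_le' d k hd hk) (le_trans ?_ (le_of_lt (bp_spec d k).2.1))
  refine Nat.pow_le_pow_left ?_ _
  have := Nat.mul_le_mul_left k (show 1 ≤ d-1 by omega)
  omega

lemma d_le_bp (d k : ℕ) (hd : 3 ≤ d) (hk : 1 ≤ k) : d - 1 ≤ bp d k := by
  have h1 : k*(d-1)+1 ≤ (k*(d-1)+1)^(d-2) :=
    Nat.le_self_pow (by omega) _
  have h2 := (bp_spec d k).2.1
  have h3 : d - 1 ≤ k*(d-1)+1 := by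
    have : 1 * (d-1) ≤ k * (d-1) := Nat.mul_le_mul_right _ hk
    omega
  omega

lemma sz_le (d k : ℕ) (hd : 3 ≤ d) (hk : 1 ≤ k) : sz d k ≤ 2 * bp d k ^ k := by
  unfold sz
  rw [card_BoxIdx _ _ _ hk]
  have h1 : Fintype.card (Pat (d-1) k) * bp d k ^ (k-1) ≤ bp d k * bp d k ^ (k-1) :=
    Nat.mul_le_mul_right _ (T_le_bp d k hd hk)
  have h2 : bp d k * bp d k ^ (k-1) = bp d k ^ k := by
    rw [← pow_succ']
    congr 1
    omega
  omega

lemma two_pow_le_sz (d k : ℕ) : 2 ^ k ≤ sz d k := by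
  have h1 : 2 ≤ bp d k := (bp_spec d k).1.two_le
  have := Nat.pow_le_pow_left h1 k
  unfold sz
  omega

lemma twok_pow_le_sz (d k : ℕ) (hd : 3 ≤ d) (hk : 1 ≤ k) : (2*k) ^ k ≤ sz d k := by
  have h1 : 2*k ≤ (k*(d-1)+1)^(d-2) := by
    refine le_trans ?_ (Nat.le_self_pow (by omega) _)
    have : k * 2 ≤ k * (d-1) := Nat.mul_le_mul_left _ (by omega)
    omega
  have h2 : 2*k ≤ bp d k := le_trans h1 (le_of_lt (bp_spec d k).2.1)
  have := Nat.pow_le_pow_left h2 k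
  unfold sz
  omega

lemma sz_ub (d k : ℕ) (hd : 3 ≤ d) (hk : 1 ≤ k) :
    sz d k ≤ (2*(k*(d-1)+1)) ^ ((d-2)*k+1) := by
  set W := 2*(k*(d-1)+1) with hW
  have hW2 : 2 ≤ W := by omega
  have h1 : bp d k ≤ W ^ (d-2) := by
    have h2 := (bp_spec d k).2.2
    have h3 : (2:ℕ) ≤ 2 ^ (d-2) := by
      calc (2:ℕ) = 2^1 := by norm_num
      _ ≤ 2^(d-2) := Nat.pow_le_pow_right (by norm_num) (by omega)
    calc bp d k ≤ 2 * (k*(d-1)+1)^(d-2) := h2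
      _ ≤ 2^(d-2) * (k*(d-1)+1)^(d-2) := Nat.mul_le_mul_right _ h3
      _ = W ^ (d-2) := by rw [hW, mul_pow]
  calc sz d k ≤ 2 * bp d k ^ k := sz_le d k hd hk
    _ ≤ 2 * (W ^ (d-2)) ^ k := by
        have := Nat.pow_le_pow_left h1 k
        omega
    _ = 2 * W ^ ((d-2)*k) := by rw [← pow_mul]
    _ ≤ W * W ^ ((d-2)*k) := Nat.mul_le_mul_right _ hW2
    _ = W ^ ((d-2)*k+1) := by rw [← pow_succ']

set_option maxHeartbeats 2000000 in
theorem final (d : ℕ) (hd : 3 ≤ d) :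
    ∃ c : ℝ, 0 < c ∧ ∀ n : ℕ, 3 ≤ n →
      ∃ O : Fin n → Set (EuclideanSpace ℝ (Fin d)),
        (∀ i, IsBox (O i)) ∧
        (∃ A : Set (Fin n),
          (∀ i ∈ A, ∀ j ∈ A, ¬ (intersectionGraph O).Adj i j) ∧
          (∀ i ∉ A, ∀ j ∉ A, ¬ (intersectionGraph O).Adj i j)) ∧
        (¬ ∃ a b x y : Fin n, a ≠ b ∧ a ≠ x ∧ a ≠ y ∧ b ≠ x ∧ b ≠ y ∧ x ≠ y ∧
          (intersectionGraph O).Adj a x ∧ (intersectionGraph O).Adj a y ∧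
          (intersectionGraph O).Adj b x ∧ (intersectionGraph O).Adj b y) ∧
        c * (n : ℝ) * (Real.log n / Real.log (Real.log n)) ^ (d - 2) ≤
          ((intersectionGraph O).edgeSet.ncard : ℝ) := by
  classical
  set k₀ := max (d-1) 2 with hk₀
  have hlog3 : 1 < Real.log 3 :=
    (Real.lt_log_iff_exp_lt (by norm_num)).mpr
      (lt_trans Real.exp_one_lt_d9 (by norm_num))
  set ε := Real.log (Real.log 3) with hε'
  have hεpos : 0 < ε := Real.log_pos hlog3
  set N₀ := sz d k₀ with hN₀
  have hN₀pos : 0 < N₀ := lt_of_lt_of_le (Nat.pow_pos (by norm_num))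
    (two_pow_le_sz d k₀)
  set M : ℝ := max (Real.log N₀ / ε) 1 with hM
  have hM1 : (1:ℝ) ≤ M := le_max_right _ _
  have hMpos : (0:ℝ) < M := lt_of_lt_of_le one_pos hM1
  set c₂ : ℝ := ((N₀ : ℝ) * M^(d-2))⁻¹ with hc₂
  have hc₂pos : 0 < c₂ := by
    rw [hc₂]
    positivity
  set C : ℝ := (15 * (d:ℝ) * d)^(d-2) with hC
  have hCpos : 0 < C := by
    rw [hC]
    positivity
  set c₁ : ℝ := (4*C)⁻¹ with hc₁
  have hc₁pos : 0 < c₁ := by rw [hc₁]; positivity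
  refine ⟨min c₁ c₂, lt_min hc₁pos hc₂pos, ?_⟩
  intro n hn
  -- common log facts
  have hn1 : (1:ℝ) < (n:ℝ) := by exact_mod_cast (by omega : 1 < n)
  have hLpos : 0 < Real.log n := Real.log_pos hn1
  have hL3 : Real.log 3 ≤ Real.log n :=
    Real.log_le_log (by norm_num) (by exact_mod_cast hn)
  have hLLε : ε ≤ Real.log (Real.log n) :=
    Real.log_le_log (by linarith) hL3
  have hLLpos : 0 < Real.log (Real.log n) := lt_of_lt_of_le hεpos hLLε
  have hρ0 : 0 ≤ Real.log n / Real.log (Real.log n) :=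
    div_nonneg (le_of_lt hLpos) (le_of_lt hLLpos)
  by_cases hbig : sz d k₀ ≤ n
  · -- main construction
    set K := Nat.findGreatest (fun k => k₀ ≤ k ∧ sz d k ≤ n) n with hK
    have hk₀n : k₀ ≤ n := by
      have h1 := Nat.lt_two_pow_self (n := k₀)
      have h2 := two_pow_le_sz d k₀
      omega
    have hKspec : k₀ ≤ K ∧ sz d K ≤ n :=
      Nat.findGreatest_spec (P := fun k => k₀ ≤ k ∧ sz d k ≤ n) hk₀n ⟨le_refl _, hbig⟩
    obtain ⟨hk₀K, hszK⟩ := hKspec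
    have hK2 : 2 ≤ K := le_trans (le_max_right _ _) hk₀K
    have hKd : d - 1 ≤ K := le_trans (le_max_left _ _) hk₀K
    have hK1 : 1 ≤ K := by omega
    have hupper : n < sz d (K+1) := by
      by_cases h : K + 1 ≤ n
      · have hgr := Nat.findGreatest_is_greatest (Nat.lt_succ_self K) h
        by_contra hcon
        push_neg at hcon
        exact hgr ⟨by omega, hcon⟩
      · have h1 := Nat.lt_two_pow_self (n := K+1)
        have h2 := two_pow_le_sz d (K+1)
        omega
    haveI : Fact (Nat.Prime (bp d K)) := ⟨(bp_spec d K).1⟩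
    obtain ⟨O, hbox, hbip, hk22, hcount⟩ :=
      main_construction hd (bp d K) K hK1 (d_le_bp d K hd hK1) n hszK
    refine ⟨O, hbox, hbip, hk22, ?_⟩
    have hcount' : (n / sz d K) * (bp d K ^ K * Fintype.card (Pat (d-1) K))
        ≤ (intersectionGraph O).edgeSet.ncard := hcount
    clear hcount
    set T := Fintype.card (Pat (d-1) K) with hT
    set B := bp d K ^ K with hB
    set S := sz d K with hS
    have hSpos : 0 < S := lt_of_lt_of_le (Nat.pow_pos (by norm_num))
      (two_pow_le_sz d K)
    -- ℕ chain : n * T ≤ 4 * ((n / S) * (B * T))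
    have hnat : n * T ≤ 4 * ((n / S) * (B * T)) := by
      have h1 : n ≤ 2 * (S * (n / S)) := by
        have hd1 := Nat.div_add_mod n S
        have hd2 : n % S < S := Nat.mod_lt _ hSpos
        have hd3 : 1 ≤ n / S := Nat.one_le_div_iff hSpos |>.mpr hszK
        have hd4 : S * 1 ≤ S * (n / S) := Nat.mul_le_mul_left _ hd3
        omega
      have h2 : S ≤ 2 * B := sz_le d K hd hK1
      calc n * T ≤ (2 * (S * (n / S))) * T := Nat.mul_le_mul_right _ h1
        _ ≤ (2 * ((2*B) * (n / S))) * T :=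
            Nat.mul_le_mul_right T (Nat.mul_le_mul_left 2 (Nat.mul_le_mul_right (n / S) h2))
        _ = 4 * ((n / S) * (B * T)) := by ring
    -- count in ℝ
    have hcountR : (n:ℝ) * T ≤ 4 * ((intersectionGraph O).edgeSet.ncard : ℝ) := by
      have h0 : n * T ≤ 4 * (intersectionGraph O).edgeSet.ncard := by
        have h4 := Nat.mul_le_mul_left 4 hcount'
        omega
      exact_mod_cast h0
    -- T lower bound via Q
    set Q := (K-1)/(d-2) with hQ
    have hTQ : (Q+1)^(d-2) ≤ T := by
      have hd21 : d - 2 + 1 = d - 1 := by omega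
      rw [hT, ← hd21]
      refine T_ge (d-2) K hK2 Q ?_ ?_
      · calc (d-2) * Q = Q * (d-2) := by ring
          _ ≤ K - 1 := Nat.div_mul_le_self _ _
      · exact lt_of_le_of_lt (Nat.div_le_self _ _) (by omega)
    have hKQ : K ≤ (d-2)*(Q+1) := by
      rw [hQ]
      have h1 := Nat.div_add_mod (K-1) (d-2)
      have h2 : (K-1) % (d-2) < d-2 := Nat.mod_lt _ (by omega)
      have h3 : (d-2)*((K-1)/(d-2)+1) = (d-2)*((K-1)/(d-2)) + (d-2) := by ring
      omega
    -- log lower bounds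
    have h2Kpos : (0:ℝ) < 2*(K:ℝ) := by positivity
    have hl1 : ((2*K)^K : ℕ) ≤ n := le_trans (twok_pow_le_sz d K hd hK1) hszK
    have hL_lb : (K:ℝ) * Real.log (2*(K:ℝ)) ≤ Real.log n := by
      have h1 : ((2*(K:ℝ)))^K ≤ (n:ℝ) := by
        exact_mod_cast hl1
      calc (K:ℝ) * Real.log (2*(K:ℝ)) = Real.log ((2*(K:ℝ))^K) := (Real.log_pow _ _).symm
        _ ≤ Real.log n := Real.log_le_log (by positivity) h1
    have hlog2K : 1 ≤ Real.log (2*(K:ℝ)) := by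
      have h4 : (4:ℝ) ≤ 2*(K:ℝ) := by
        have : (2:ℝ) ≤ (K:ℝ) := by exact_mod_cast hK2
        linarith
      have := (Real.lt_log_iff_exp_lt h2Kpos).mpr
        (lt_of_lt_of_le (lt_trans Real.exp_one_lt_d9 (by norm_num)) h4)
      linarith
    have hLK : (K:ℝ) ≤ Real.log n := by
      calc (K:ℝ) = (K:ℝ) * 1 := by ring
        _ ≤ (K:ℝ) * Real.log (2*(K:ℝ)) := by
            have : (0:ℝ) ≤ (K:ℝ) := by positivity
            nlinarith
        _ ≤ Real.log n := hL_lb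
    have hlogKpos : 0 < Real.log (K:ℝ) := Real.log_pos (by exact_mod_cast hK2)
    have hLLK : Real.log (K:ℝ) ≤ Real.log (Real.log n) :=
      Real.log_le_log (by exact_mod_cast (by omega : 0 < K)) hLK
    -- log upper bound
    set W := 2*((K+1)*(d-1)+1) with hW
    set E := (d-2)*(K+1)+1 with hE
    have hnW : n ≤ W ^ E := by
      have h := sz_ub d (K+1) hd (by omega)
      rw [← hW, ← hE] at h
      omega
    have hWpos : 0 < W := by omega
    have hL_ub : Real.log n ≤ (E:ℝ) * Real.log (W:ℝ) := by
      calc Real.log n ≤ Real.log ((W:ℝ)^E) := by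
            refine Real.log_le_log (by positivity) ?_
            exact_mod_cast hnW
        _ = (E:ℝ) * Real.log (W:ℝ) := Real.log_pow _ _
    have hWK : W ≤ K^5 := by
      have h1 : (K+1)*(d-1) ≤ (2*K)*K := Nat.mul_le_mul (by omega) hKd
      have h2 : K^3 ≥ 8 := by
        calc (8:ℕ) = 2^3 := by norm_num
          _ ≤ K^3 := Nat.pow_le_pow_left hK2 _
      have h3 : K^5 = K^2 * K^3 := by ring
      have h4 : K^2 * 8 ≤ K^2 * K^3 := Nat.mul_le_mul_left _ h2
      have h5 : (2*K)*K = 2*K^2 := by ring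
      have h6 : 1 ≤ K^2 := Nat.one_le_pow _ _ (by omega)
      omega
    have hlogW : Real.log (W:ℝ) ≤ 5 * Real.log (K:ℝ) := by
      calc Real.log (W:ℝ) ≤ Real.log ((K:ℝ)^5) := by
            refine Real.log_le_log (by exact_mod_cast hWpos) ?_
            exact_mod_cast hWK
        _ = 5 * Real.log (K:ℝ) := by rw [Real.log_pow]; norm_num
    have hEub : (E:ℝ) ≤ 3*((d:ℝ)-2)*K := by
      have h1 : E ≤ 3*((d-2)*K) := by
        have h2 : (d-2)*(K+1) = (d-2)*K + (d-2) := by ring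
        have h3 : (d-2)*2 ≤ (d-2)*K := Nat.mul_le_mul_left _ hK2
        omega
      have h4 : ((3*((d-2)*K) : ℕ) : ℝ) = 3*((d:ℝ)-2)*K := by
        push_cast [Nat.cast_sub (by omega : 2 ≤ d)]
        ring
      calc (E:ℝ) ≤ ((3*((d-2)*K) : ℕ) : ℝ) := by exact_mod_cast h1
        _ = 3*((d:ℝ)-2)*K := h4
    -- ρ bound
    have hLub2 : Real.log n ≤ 15*((d:ℝ)-2)*(K:ℝ) * Real.log (K:ℝ) := by
      calc Real.log n ≤ (E:ℝ) * Real.log (W:ℝ) := hL_ub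
        _ ≤ (3*((d:ℝ)-2)*K) * (5 * Real.log (K:ℝ)) := by
            have hd3 : (3:ℝ) ≤ (d:ℝ) := by exact_mod_cast hd
            have hK0 : (0:ℝ) ≤ (K:ℝ) := Nat.cast_nonneg _
            refine mul_le_mul hEub hlogW (Real.log_nonneg ?_) (by nlinarith)
            exact_mod_cast hWpos
        _ = 15*((d:ℝ)-2)*(K:ℝ) * Real.log (K:ℝ) := by ring
    have hρub : Real.log n / Real.log (Real.log n) ≤ 15*((d:ℝ)-2)*(K:ℝ) := by
      calc Real.log n / Real.log (Real.log n) ≤ Real.log n / Real.log (K:ℝ) :=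
            div_le_div_of_nonneg_left (le_of_lt hLpos) hlogKpos hLLK
        _ ≤ 15*((d:ℝ)-2)*(K:ℝ) := by
            rw [div_le_iff₀ hlogKpos]
            exact hLub2
    -- assemble
    have hKQ' : (K:ℝ) ≤ ((d:ℝ)-2)*((Q:ℝ)+1) := by
      have : ((d-2)*(Q+1) : ℕ) = ((d:ℝ)-2)*((Q:ℝ)+1) := by
        push_cast [Nat.cast_sub (by omega : 2 ≤ d)]
        ring
      calc (K:ℝ) ≤ (((d-2)*(Q+1) : ℕ) : ℝ) := by exact_mod_cast hKQ
        _ = ((d:ℝ)-2)*((Q:ℝ)+1) := this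
    have hρub2 : Real.log n / Real.log (Real.log n) ≤ (15*(d:ℝ)*d)*((Q:ℝ)+1) := by
      calc Real.log n / Real.log (Real.log n) ≤ 15*((d:ℝ)-2)*(K:ℝ) := hρub
        _ ≤ 15*((d:ℝ)-2)*(((d:ℝ)-2)*((Q:ℝ)+1)) := by
            have h15 : (0:ℝ) ≤ 15*((d:ℝ)-2) := by
              have : (3:ℝ) ≤ (d:ℝ) := by exact_mod_cast hd
              linarith
            nlinarith [hKQ']
        _ ≤ (15*(d:ℝ)*d)*((Q:ℝ)+1) := by
            have hd3 : (3:ℝ) ≤ (d:ℝ) := by exact_mod_cast hd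
            have hQ0 : (0:ℝ) ≤ (Q:ℝ) := by positivity
            nlinarith
    have hρpow : (Real.log n / Real.log (Real.log n))^(d-2) ≤ C * (T:ℝ) := by
      calc (Real.log n / Real.log (Real.log n))^(d-2)
          ≤ ((15*(d:ℝ)*d)*((Q:ℝ)+1))^(d-2) := pow_le_pow_left₀ hρ0 hρub2 _
        _ = C * ((Q:ℝ)+1)^(d-2) := by rw [hC, mul_pow]
        _ ≤ C * (T:ℝ) := by
            refine mul_le_mul_of_nonneg_left ?_ (le_of_lt hCpos)
            have : (((Q+1)^(d-2) : ℕ) : ℝ) ≤ (T:ℝ) := by exact_mod_cast hTQ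
            calc ((Q:ℝ)+1)^(d-2) = (((Q+1)^(d-2) : ℕ) : ℝ) := by push_cast; ring
              _ ≤ (T:ℝ) := this
    calc min c₁ c₂ * n * (Real.log n / Real.log (Real.log n))^(d-2)
        ≤ c₁ * n * (C * (T:ℝ)) := by
          refine mul_le_mul ?_ hρpow (pow_nonneg hρ0 _) (by positivity)
          refine mul_le_mul_of_nonneg_right (min_le_left _ _) (by positivity)
      _ = (n * T) / 4 := by
          have hCne : C ≠ 0 := ne_of_gt hCpos
          have hCC : C * (4*C)⁻¹ = 4⁻¹ := by
            rw [mul_inv, ← mul_assoc, mul_comm C, mul_assoc, mul_inv_cancel₀ hCne, mul_one]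
          rw [hc₁]
          calc (4*C)⁻¹ * (n:ℝ) * (C*(T:ℝ)) = ((n:ℝ)*(T:ℝ)) * (C * (4*C)⁻¹) := by ring
            _ = ((n:ℝ)*(T:ℝ)) * 4⁻¹ := by rw [hCC]
            _ = (n:ℝ)*(T:ℝ)/4 := by rw [div_eq_mul_inv]
      _ ≤ ((intersectionGraph O).edgeSet.ncard : ℝ) := by linarith [hcountR]
  · -- small case
    push_neg at hbig
    obtain ⟨O, hbox, hbip, hk22, hcount⟩ := small_case hd hn
    refine ⟨O, hbox, hbip, hk22, ?_⟩
    have hρM : Real.log n / Real.log (Real.log n) ≤ M := by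
      have h1 : Real.log n ≤ Real.log N₀ := by
        refine Real.log_le_log (by positivity) ?_
        exact_mod_cast le_of_lt hbig
      calc Real.log n / Real.log (Real.log n) ≤ Real.log n / ε :=
            div_le_div_of_nonneg_left (le_of_lt hLpos) hεpos hLLε
        _ ≤ Real.log N₀ / ε := by
            exact div_le_div_of_nonneg_right h1 (le_of_lt hεpos)
        _ ≤ M := le_max_left _ _
    have hc1 : (1:ℝ) ≤ ((intersectionGraph O).edgeSet.ncard : ℝ) := by exact_mod_cast hcount
    have hchain : min c₁ c₂ * n * (Real.log n / Real.log (Real.log n))^(d-2) ≤ 1 := by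
      calc min c₁ c₂ * n * (Real.log n / Real.log (Real.log n))^(d-2)
          ≤ c₂ * N₀ * M^(d-2) := by
            refine mul_le_mul ?_ (pow_le_pow_left₀ hρ0 hρM _) (pow_nonneg hρ0 _) (by positivity)
            refine mul_le_mul (min_le_right _ _) ?_ (by positivity) (le_of_lt hc₂pos)
            exact_mod_cast le_of_lt hbig
        _ = 1 := by
            rw [hc₂]
            have h1 : ((N₀:ℝ) * M^(d-2)) ≠ 0 := by positivity
            calc ((N₀:ℝ) * M^(d-2))⁻¹ * (N₀:ℝ) * M^(d-2)
                = ((N₀:ℝ) * M^(d-2))⁻¹ * ((N₀:ℝ) * M^(d-2)) := by ring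
              _ = 1 := inv_mul_cancel₀ h1
    linarith [hchain, hc1]


end S16

theorem stmt_16 (d : ℕ) (hd : 3 ≤ d) :
    ∃ c : ℝ, 0 < c ∧ ∀ n : ℕ, 3 ≤ n →
      ∃ O : Fin n → Set (EuclideanSpace ℝ (Fin d)),
        (∀ i, IsBox (O i)) ∧
        (∃ A : Set (Fin n),
          (∀ i ∈ A, ∀ j ∈ A, ¬ (intersectionGraph O).Adj i j) ∧
          (∀ i ∉ A, ∀ j ∉ A, ¬ (intersectionGraph O).Adj i j)) ∧
        (¬ ∃ a b x y : Fin n, a ≠ b ∧ a ≠ x ∧ a ≠ y ∧ b ≠ x ∧ b ≠ y ∧ x ≠ y ∧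
          (intersectionGraph O).Adj a x ∧ (intersectionGraph O).Adj a y ∧
          (intersectionGraph O).Adj b x ∧ (intersectionGraph O).Adj b y) ∧
        c * (n : ℝ) * (Real.log n / Real.log (Real.log n)) ^ (d - 2) ≤
          ((intersectionGraph O).edgeSet.ncard : ℝ) := by
  exact S16.final d hd
end
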